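/- arXiv:2004.09637 — 6 statements merged into one kernel-verified Lean document; each statement's English description precedes it below -/
import Mathlib

section
/- Let V be a finite-dimensional real inner product space, H a complex Hilbert space, 𝒜 = B(H), and T : V → V a linear map. Let Ξ : L²(ℝ; V) → 𝒜 be a continuous ℝ-linear map with Ξ(f)Ξ(g) = −Ξ(g)Ξ(f) for all f, g ∈ L²(ℝ; V), and let Ψ₀ : V → 𝒜 be a continuous linear map with Ψ₀(v)Ψ₀(w) = −Ψ₀(w)Ψ₀(v) and Ψ₀(v)Ξ(f) = −Ξ(f)Ψ₀(v) for all v, w ∈ V and f ∈ L²(ℝ; V). For t ≥ 0 set B_t(v) := Ξ(s ↦ 1_{[0,t]}(s)·v) and define Ψ_t(v) := Ψ₀(e^{tT} v) + Ξ(s ↦ 1_{[0,t]}(s)·e^{(t−s)T} v), where e^{sT} denotes the exponential of T in the endomorphisms of V. Then: (a) for each t ≥ 0, Ψ_t(v)² = 0 for all v ∈ V, so Ψ_t extends to an algebra homomorphism ΛV → 𝒜; (b) t ↦ Ψ_t is continuous in operator norm; (c) Ψ_t(v) = Ψ₀(v) + ∫₀ᵗ Ψ_s(T v) ds + B_t(v)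 for all t ≥ 0 and v ∈ V; and (d) Ψ is the unique continuous map from [0, ∞) to the continuous linear maps V → 𝒜 satisfying the integral equation in (c). -/
/-!
The process is the variation-of-constants solution of `dΨ = Ψ ∘ T dt + dB`. Subtracting
`1_{[0,t]} v` (whose image under `Ξ` is `B_t v`) from the kernel `1_{[0,t]} e^{(t-·)T} v` leaves a
function of `(t - s)⁺` that is Lipschitz in `t`, so by dominated convergence for the difference
quotients it is differentiable as an `L²`-valued curve, with derivative `1_{[0,t]} e^{(t-·)T} T v`.
The integral equation then follows from the fundamental theorem of calculus, and uniqueness from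
Grönwall's inequality: the difference `Δ` of two solutions satisfies `Δ_t = ∫₀ᵗ Δ_s ∘ T ds`.
Finally `Ψ_t v` is the sum of a value of `Ψ₀` and a value of `Ξ`, which anticommute with
themselves and with each other, so it squares to zero.
-/

open MeasureTheory Set Filter Topology NormedSpace
open scoped ENNReal NNReal symmDiff

namespace MeasureTheory

variable {α E : Type*} [MeasurableSpace α] {μ : Measure α} [NormedAddCommGroup E]
  {p : ℝ≥0∞}

theorem tendsto_toLp_of_dominated [Fact (1 ≤ p)] (hp : p ≠ ∞) {ι : Type*} {l : Filter ι}
    [l.IsCountablyGenerated] [l.NeBot] {F : ι → α → E} {f : α → E} {bound : α → ℝ}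
    (hF : ∀ i, MemLp (F i) p μ) (hf : MemLp f p μ) (hbound : MemLp bound p μ)
    (h_le : ∀ᶠ i in l, ∀ a, ‖F i a‖ ≤ bound a)
    (h_lim : ∀ᵐ a ∂μ, Tendsto (fun i => F i a) l (𝓝 (f a))) :
    Tendsto (fun i => (hF i).toLp (F i)) l (𝓝 (hf.toLp f)) := by
  have hp0 : p ≠ 0 := (zero_lt_one.trans_le Fact.out).ne'
  have hq : 0 < p.toReal := ENNReal.toReal_pos hp0 hp
  have hf_le : ∀ᵐ a ∂μ, ‖f a‖ ≤ bound a := by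
    filter_upwards [h_lim] with a ha
    exact le_of_tendsto ha.norm (h_le.mono fun i hi => hi a)
  have h_int : Tendsto (fun i => ∫⁻ a, ‖F i a - f a‖ₑ ^ p.toReal ∂μ) l (𝓝 0) := by
    have h_fin := lintegral_rpow_enorm_lt_top_of_eLpNorm_lt_top hp0 hp
      (hbound.const_mul 2).eLpNorm_lt_top
    have := tendsto_lintegral_filter_of_dominated_convergence' (μ := μ) (l := l)
      (F := fun i a => ‖F i a - f a‖ₑ ^ p.toReal) (f := fun _ => 0) _
      (Eventually.of_forall fun i => (ENNReal.continuous_rpow_const.measurable.comp_aemeasurable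
        ((hF i).1.sub hf.1).enorm)) ?_ h_fin.ne ?_
    · simpa using this
    · filter_upwards [h_le] with i hi
      filter_upwards [hf_le] with a ha
      gcongr
      rw [enorm_le_iff_norm_le, Real.norm_of_nonneg (by linarith [norm_nonneg (f a)])]
      linarith [norm_sub_le (F i a) (f a), hi a]
    · filter_upwards [h_lim] with a ha
      have := ((ENNReal.continuous_rpow_const (y := p.toReal)).tendsto _).comp
        (ha.sub_const (f a)).enorm
      rwa [sub_self, enorm_zero, ENNReal.zero_rpow_of_pos hq] at this
  rw [Lp.tendsto_Lp_iff_tendsto_eLpNorm'']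
  simp_rw [eLpNorm_eq_lintegral_rpow_enorm_toReal hp0 hp, Pi.sub_apply]
  have := ((ENNReal.continuous_rpow_const (y := 1 / p.toReal)).tendsto 0).comp h_int
  rwa [ENNReal.zero_rpow_of_pos (by positivity)] at this

theorem ContinuousOn.memLp_indicator_of_isCompact {X : Type*} [TopologicalSpace X]
    [MeasurableSpace X] [OpensMeasurableSpace X] [SecondCountableTopologyEither X E]
    {μ : Measure X} [IsFiniteMeasureOnCompacts μ] {s : Set X} {f : X → E}
    (hf : ContinuousOn f s) (hs : IsCompact s) (hs' : MeasurableSet s) :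
    MemLp (s.indicator f) p μ := by
  rw [memLp_indicator_iff_restrict hs']
  have : IsFiniteMeasure (μ.restrict s) := isFiniteMeasure_restrict.2 hs.measure_lt_top.ne
  obtain ⟨C, hC⟩ := hs.exists_bound_of_continuousOn hf
  exact MemLp.of_bound (hf.aestronglyMeasurable hs') C ((ae_restrict_iff' hs').2 (ae_of_all _ hC))

def _root_.LinearMap.toLp {𝕜 V : Type*} [NormedField 𝕜] [AddCommGroup V] [Module 𝕜 V]
    [NormedSpace 𝕜 E] [Fact (1 ≤ p)] (L : V →ₗ[𝕜] α → E) (hL : ∀ v, MemLp (L v) p μ) :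
    V →ₗ[𝕜] Lp E p μ where
  toFun v := (hL v).toLp (L v)
  map_add' v w := by
    rw [← MemLp.toLp_add]
    exact MemLp.toLp_congr _ _ (by rw [map_add])
  map_smul' c v := by
    rw [RingHom.id_apply, ← MemLp.toLp_const_smul]
    exact MemLp.toLp_congr _ _ (by rw [map_smul])

theorem continuous_indicatorConstLp_Icc [Fact (1 ≤ p)] (hp : p ≠ ∞) (a : ℝ) (c : E) :
    Continuous fun t : ℝ =>
      indicatorConstLp (μ := volume) p (measurableSet_Icc (a := a) (b := t))
        measure_Icc_lt_top.ne c := by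
  refine continuous_indicatorConstLp_set hp fun x => ?_
  have h_le : ∀ y, volume (Icc a y ∆ Icc a x) ≤ ENNReal.ofReal |y - x| := fun y => by
    rw [← Real.volume_interval]
    refine measure_mono fun s hs => ?_
    simp only [mem_symmDiff, mem_Icc, mem_uIcc] at hs ⊢
    grind
  have h_lim : Tendsto (fun y => ENNReal.ofReal |y - x|) (𝓝 x) (𝓝 0) :=
    (ENNReal.continuous_ofReal.comp (continuous_abs.comp
      (continuous_sub_right x))).tendsto' x 0 (by simp)
  exact tendsto_of_tendsto_of_tendsto_of_le_of_le tendsto_const_nhds h_lim (fun _ => bot_le)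
    h_le

end MeasureTheory

theorem eqOn_zero_of_eq_integral_clm {E : Type*} [NormedAddCommGroup E] [NormedSpace ℝ E]
    [CompleteSpace E] (A : E →L[ℝ] E) {φ : ℝ → E} (hφ : ContinuousOn φ (Ici 0))
    (h : ∀ s, 0 ≤ s → φ s = ∫ σ in (0 : ℝ)..s, A (φ σ)) : EqOn φ 0 (Ici 0) := by
  have hAφ : ContinuousOn (fun σ => A (φ σ)) (Ici 0) := A.continuous.comp_continuousOn hφ
  intro t ht
  refine eq_zero_of_abs_deriv_le_mul_abs_self_of_eq_zero_right (K := ‖A‖)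
    (hφ.mono Icc_subset_Ici_self) (fun x hx => ?_) (by simpa using h 0 le_rfl)
    (fun x _ => A.le_opNorm _) t ⟨ht, le_rfl⟩
  have hIoi : Ioi x ⊆ Ici 0 := fun y hy => hx.1.trans (le_of_lt hy)
  have hint : IntervalIntegrable (fun σ => A (φ σ)) volume 0 x :=
    (hAφ.mono (by rw [uIcc_of_le hx.1]; exact Icc_subset_Ici_self)).intervalIntegrable
  refine (intervalIntegral.integral_hasDerivWithinAt_right hint
    ((hAφ.stronglyMeasurableAtFilter_nhdsWithin measurableSet_Ici x).filter_mono
      (nhdsWithin_mono x hIoi)) ((hAφ x hx.1).mono hIoi)).congr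
    (fun y hy => h y (hx.1.trans hy)) (h x hx.1)

theorem add_mul_self_eq_zero_of_anticomm {R : Type*} [NonUnitalNonAssocRing R]
    [IsAddTorsionFree R] {a b : R} (ha : a * a = -(a * a)) (hb : b * b = -(b * b))
    (hab : a * b = -(b * a)) : (a + b) * (a + b) = 0 := by
  rw [add_mul, mul_add, mul_add, self_eq_neg.1 ha, self_eq_neg.1 hb, hab]
  abel

section OrnsteinUhlenbeck

variable {V : Type*} [NormedAddCommGroup V] [NormedSpace ℝ V] (T : V →L[ℝ] V)

noncomputable def ouKernel (t : ℝ) : V →ₗ[ℝ] ℝ → V where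
  toFun v := (Icc 0 t).indicator fun s => exp ((t - s) • T) v
  map_add' v w := by ext s; by_cases hs : s ∈ Icc 0 t <;> simp [hs]
  map_smul' c v := by ext s; by_cases hs : s ∈ Icc 0 t <;> simp [hs]

/-- Equals `1_{[0,t]}(s) (e^{(t-s)T} v - v)` (`ouKernel_sub_indicator`); in this form `t` enters
only through `(t - s)⁺`, which makes it Lipschitz in `t`. -/
noncomputable def ouKernelCentered (t : ℝ) (v : V) (s : ℝ) : V :=
  (Ici 0).indicator (fun s => exp (max (t - s) 0 • T) v - v) s

theorem ouKernel_sub_indicator (t : ℝ) (v : V) :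
    ouKernel T t v - (Icc 0 t).indicator (fun _ => v) = ouKernelCentered T t v := by
  ext s
  simp only [ouKernel, ouKernelCentered, LinearMap.coe_mk, AddHom.coe_mk, Pi.sub_apply]
  rcases lt_or_ge s 0 with hs | hs
  · simp [hs]
  rcases le_or_gt s t with hst | hst
  · simp [hs, hst]
  · simp [hs, hst, hst.le]

theorem norm_ouKernelCentered_sub_le (v : V) {M : ℝ} {K : ℝ≥0}
    (hK : LipschitzOnWith K (fun τ : ℝ => exp (max τ 0 • T) v - v) (Iic M))
    {y t : ℝ} (hy : y ≤ M) (ht : t ≤ M) (u : ℝ) :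
    ‖ouKernelCentered T y v u - ouKernelCentered T t v u‖ ≤
      (Icc 0 M).indicator (fun _ => (K : ℝ)) u * |y - t| := by
  simp only [ouKernelCentered]
  by_cases hu0 : u ∈ Ici 0
  · simp only [indicator_of_mem hu0]
    by_cases huM : u ≤ M
    · rw [indicator_of_mem (mem_Icc.2 ⟨hu0, huM⟩)]
      have := hK.norm_sub_le (show y - u ∈ Iic M by simp; linarith [mem_Ici.1 hu0])
        (show t - u ∈ Iic M by simp; linarith [mem_Ici.1 hu0])
      simpa [Real.norm_eq_abs] using this
    · have hyu : max (y - u) 0 = 0 := max_eq_right (by linarith)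
      have htu : max (t - u) 0 = 0 := max_eq_right (by linarith)
      simpa [hyu, htu] using mul_nonneg (indicator_nonneg (fun _ _ => K.2) u) (abs_nonneg _)
  · simp [indicator_of_notMem hu0, indicator_of_notMem (fun h : u ∈ Icc 0 M => hu0 h.1)]

variable [CompleteSpace V]

theorem hasDerivAt_exp_smul_apply (v : V) (τ : ℝ) :
    HasDerivAt (fun τ : ℝ => exp (τ • T) v) (exp (τ • T) (T v)) τ := by
  simpa using (hasDerivAt_exp_smul_const T τ).clm_apply (hasDerivAt_const τ v)

theorem continuous_exp_smul_apply (v : V) : Continuous fun τ : ℝ => exp (τ • T) v :=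
  continuous_iff_continuousAt.2 fun τ => (hasDerivAt_exp_smul_apply T v τ).continuousAt

theorem memLp_ouKernel {p : ℝ≥0∞} (t : ℝ) (v : V) : MemLp (ouKernel T t v) p volume :=
  ((continuous_exp_smul_apply T v).comp (continuous_const.sub continuous_id)).continuousOn
    |>.memLp_indicator_of_isCompact isCompact_Icc measurableSet_Icc

theorem memLp_ouKernelCentered {p : ℝ≥0∞} (t : ℝ) (v : V) :
    MemLp (ouKernelCentered T t v) p volume := by
  rw [← ouKernel_sub_indicator]
  exact (memLp_ouKernel T t v).sub
    (memLp_indicator_const p measurableSet_Icc v (Or.inr measure_Icc_lt_top.ne))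

theorem hasDerivAt_exp_max_sub (v : V) {τ : ℝ} (hτ : τ ≠ 0) :
    HasDerivAt (fun τ : ℝ => exp (max τ 0 • T) v - v)
      ((Ici 0).indicator (fun τ => exp (τ • T) (T v)) τ) τ := by
  rcases hτ.lt_or_gt with hτ | hτ
  · rw [indicator_of_notMem (show τ ∉ Ici 0 from hτ.not_ge)]
    refine (hasDerivAt_const τ 0).congr_of_eventuallyEq ?_
    filter_upwards [Iio_mem_nhds hτ] with σ hσ
    simp [max_eq_right (mem_Iio.1 hσ).le]
  · rw [indicator_of_mem (mem_Ici.2 hτ.le)]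
    refine ((hasDerivAt_exp_smul_apply T v τ).sub_const v).congr_of_eventuallyEq ?_
    filter_upwards [Ioi_mem_nhds hτ] with σ hσ
    simp [max_eq_left (mem_Ioi.1 hσ).le]

theorem exists_lipschitzOnWith_exp_max_sub (v : V) (M : ℝ) :
    ∃ K, LipschitzOnWith K (fun τ : ℝ => exp (max τ 0 • T) v - v) (Iic M) := by
  obtain ⟨C, hC⟩ := (isCompact_Icc (a := 0) (b := max M 0)).exists_bound_of_continuousOn
    (continuous_exp_smul_apply T (T v)).continuousOn
  have hexp : LipschitzOnWith C.toNNReal (fun τ : ℝ => exp (τ • T) v - v)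
      (Icc 0 (max M 0)) :=
    (convex_Icc _ _).lipschitzOnWith_of_nnnorm_hasDerivWithin_le
      (fun τ _ => ((hasDerivAt_exp_smul_apply T v τ).sub_const v).hasDerivWithinAt)
      (fun τ hτ => by
        rw [← NNReal.coe_le_coe, coe_nnnorm, Real.coe_toNNReal']
        exact (hC τ hτ).trans (le_max_left _ _))
  refine ⟨_, hexp.comp ((LipschitzWith.id.max_const 0).lipschitzOnWith (s := Iic M)) ?_⟩
  exact fun τ hτ => ⟨le_max_right _ _, max_le_max_right _ hτ⟩

theorem hasDerivAt_ouKernelCentered (v : V) {t u : ℝ} (hu : u ≠ t) :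
    HasDerivAt (fun y => ouKernelCentered T y v u) (ouKernel T t (T v) u) t := by
  simp only [ouKernelCentered, ouKernel, LinearMap.coe_mk, AddHom.coe_mk]
  by_cases hu0 : u ∈ Ici 0
  · simp only [indicator_of_mem hu0]
    have h := (hasDerivAt_exp_max_sub T v (sub_ne_zero.2 hu.symm)).comp_sub_const t u
    convert h using 1
    by_cases hut : u ≤ t
    · simp [indicator_of_mem (mem_Icc.2 ⟨hu0, hut⟩), hut]
    · simp [not_le.1 hut]
  · simp only [indicator_of_notMem hu0, indicator_of_notMem (fun h : u ∈ Icc 0 t => hu0 h.1)]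
    exact hasDerivAt_const t 0

theorem hasDerivAt_toLp_ouKernelCentered (v : V) (t : ℝ) :
    HasDerivAt (fun y => (memLp_ouKernelCentered T y v).toLp (ouKernelCentered T y v) :
        ℝ → Lp V 2 volume)
      ((memLp_ouKernel T t (T v)).toLp (ouKernel T t (T v))) t := by
  obtain ⟨K, hK⟩ := exists_lipschitzOnWith_exp_max_sub T v (t + 1)
  have hslope : ∀ y, MemLp (fun u => (y - t)⁻¹ •
      (ouKernelCentered T y v u - ouKernelCentered T t v u)) 2 volume := fun y =>
    ((memLp_ouKernelCentered T y v).sub (memLp_ouKernelCentered T t v)).const_smul _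
  have h := tendsto_toLp_of_dominated (l := 𝓝[≠] t) ENNReal.ofNat_ne_top hslope
    (memLp_ouKernel T t (T v))
    (memLp_indicator_const 2 (measurableSet_Icc (a := 0) (b := t + 1)) (K : ℝ)
      (Or.inr measure_Icc_lt_top.ne)) ?_ ?_
  · rw [hasDerivAt_iff_tendsto_slope]
    refine h.congr fun y => ?_
    rw [slope_def_module, ← MemLp.toLp_sub, ← MemLp.toLp_const_smul]
    rfl
  · filter_upwards [eventually_nhdsWithin_of_eventually_nhds (Iio_mem_nhds (lt_add_one t)),
      self_mem_nhdsWithin] with y hy hyt u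
    rw [norm_smul, norm_inv, Real.norm_eq_abs, inv_mul_le_iff₀ (abs_pos.2 (sub_ne_zero.2 hyt)),
      mul_comm]
    exact norm_ouKernelCentered_sub_le T v hK (le_of_lt hy) (lt_add_one t).le u
  · filter_upwards [Measure.ae_ne volume t] with u hu
    refine (hasDerivAt_iff_tendsto_slope.1 (hasDerivAt_ouKernelCentered T v hu)).congr fun y => ?_
    rw [slope_def_module]

section Solution

variable [FiniteDimensional ℝ V]

noncomputable def ouNoise (t : ℝ) : V →L[ℝ] Lp V 2 (volume : Measure ℝ) :=
  ((ouKernel T t).toLp fun v => memLp_ouKernel T t v).toContinuousLinearMap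

theorem ouNoise_apply (t : ℝ) (v : V) :
    ouNoise T t v = (memLp_ouKernel T t v).toLp (ouKernel T t v) :=
  rfl

theorem ouNoise_sub_indicatorConstLp (t : ℝ) (v : V) :
    ouNoise T t v - indicatorConstLp 2 (measurableSet_Icc (a := 0) (b := t))
      measure_Icc_lt_top.ne v =
      (memLp_ouKernelCentered T t v).toLp (ouKernelCentered T t v) := by
  rw [ouNoise_apply, indicatorConstLp, ← MemLp.toLp_sub]
  exact MemLp.toLp_congr _ _ (by rw [ouKernel_sub_indicator])

theorem ouNoise_sub_indicatorConstLp_zero (v : V) :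
    ouNoise T 0 v - indicatorConstLp 2 (measurableSet_Icc (a := 0) (b := 0))
      measure_Icc_lt_top.ne v = 0 := by
  have h : ouKernelCentered T 0 v = 0 := by
    ext s
    by_cases hs : s ∈ Ici 0
    · simp [ouKernelCentered, hs, mem_Ici.1 hs]
    · simp [ouKernelCentered, hs]
  rw [ouNoise_sub_indicatorConstLp, MemLp.toLp_congr _ (MemLp.zero (ε := V))
    (Eventually.of_forall (congrFun h)), MemLp.toLp_zero]

theorem hasDerivAt_ouNoise_sub_indicatorConstLp (v : V) (t : ℝ) :
    HasDerivAt (fun y => ouNoise T y v -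
        indicatorConstLp 2 (measurableSet_Icc (a := 0) (b := y)) measure_Icc_lt_top.ne v)
      (ouNoise T t (T v)) t := by
  simp_rw [ouNoise_sub_indicatorConstLp]
  exact hasDerivAt_toLp_ouKernelCentered T v t

theorem continuous_ouNoise_apply (v : V) : Continuous fun t => ouNoise T t v := by
  have h := (continuous_iff_continuousAt.2 fun t =>
    (hasDerivAt_ouNoise_sub_indicatorConstLp T v t).continuousAt).add
    (continuous_indicatorConstLp_Icc ENNReal.ofNat_ne_top 0 v)
  exact h.congr fun t => sub_add_cancel _ _

variable {A : Type*} [NormedAddCommGroup A] [NormedSpace ℝ A]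
  (Ψ₀ : V →L[ℝ] A) (Ξ : Lp V 2 (volume : Measure ℝ) →L[ℝ] A)

noncomputable def ouProcess (t : ℝ) : V →L[ℝ] A :=
  Ψ₀.comp (exp (t • T)) + Ξ.comp (ouNoise T t)

theorem continuous_ouProcess : Continuous (ouProcess T Ψ₀ Ξ) :=
  continuous_clm_apply.2 fun v => (Ψ₀.continuous.comp (continuous_exp_smul_apply T v)).add
    (Ξ.continuous.comp (continuous_ouNoise_apply T v))

variable [CompleteSpace A]

theorem ouProcess_eq_integral (t : ℝ) (v : V) :
    ouProcess T Ψ₀ Ξ t v = Ψ₀ v + (∫ s in (0 : ℝ)..t, ouProcess T Ψ₀ Ξ s (T v)) +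
      Ξ (indicatorConstLp 2 (measurableSet_Icc (a := 0) (b := t)) measure_Icc_lt_top.ne v) := by
  have hderiv : ∀ y, HasDerivAt (fun y => Ψ₀ (exp (y • T) v) + Ξ (ouNoise T y v -
      indicatorConstLp 2 (measurableSet_Icc (a := 0) (b := y)) measure_Icc_lt_top.ne v))
      (ouProcess T Ψ₀ Ξ y (T v)) y := fun y =>
    (Ψ₀.hasFDerivAt.comp_hasDerivAt y (hasDerivAt_exp_smul_apply T v y)).add
      (Ξ.hasFDerivAt.comp_hasDerivAt y (hasDerivAt_ouNoise_sub_indicatorConstLp T v y))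
  rw [intervalIntegral.integral_eq_sub_of_hasDerivAt (fun y _ => hderiv y)
    (((continuous_ouProcess T Ψ₀ Ξ).clm_apply continuous_const).intervalIntegrable 0 t),
    ouNoise_sub_indicatorConstLp_zero]
  simp only [ouProcess, add_apply, ContinuousLinearMap.comp_apply, zero_smul,
    exp_zero, one_apply_eq_self, map_zero, map_sub]
  abel

theorem eqOn_ouProcess_of_eq_integral {Ψ : ℝ → V →L[ℝ] A} (hΨ : ContinuousOn Ψ (Ici 0))
    (hΨ_eq : ∀ t, 0 ≤ t → ∀ v, Ψ t v = Ψ₀ v + (∫ s in (0 : ℝ)..t, Ψ s (T v)) +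
      Ξ (indicatorConstLp 2 (measurableSet_Icc (a := 0) (b := t)) measure_Icc_lt_top.ne v)) :
    EqOn Ψ (ouProcess T Ψ₀ Ξ) (Ici 0) := by
  have hΔ : ContinuousOn (fun s => Ψ s - ouProcess T Ψ₀ Ξ s) (Ici 0) :=
    hΨ.sub (continuous_ouProcess T Ψ₀ Ξ).continuousOn
  refine fun t ht => sub_eq_zero.1 (eqOn_zero_of_eq_integral_clm
    ((ContinuousLinearMap.compL ℝ V V A).flip T) hΔ (fun s hs => ?_) ht)
  have hsub : uIcc 0 s ⊆ Ici 0 := by rw [uIcc_of_le hs]; exact Icc_subset_Ici_self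
  have hint : ∀ {Φ : ℝ → V →L[ℝ] A}, ContinuousOn Φ (Ici 0) → ∀ w,
      IntervalIntegrable (fun σ => Φ σ w) volume 0 s := fun hΦ w =>
    ((hΦ.clm_apply continuousOn_const).mono hsub).intervalIntegrable
  have hint_comp : IntervalIntegrable (fun σ => (ContinuousLinearMap.compL ℝ V V A).flip T
      (Ψ σ - ouProcess T Ψ₀ Ξ σ)) volume 0 s :=
    ((((ContinuousLinearMap.compL ℝ V V A).flip T).continuous.comp_continuousOn hΔ).mono
      hsub).intervalIntegrable
  ext v
  rw [ContinuousLinearMap.intervalIntegral_apply hint_comp]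
  simp only [sub_apply, ContinuousLinearMap.flip_apply,
    ContinuousLinearMap.compL_apply, ContinuousLinearMap.comp_apply]
  rw [intervalIntegral.integral_sub (hint hΨ (T v))
    (hint (continuous_ouProcess T Ψ₀ Ξ).continuousOn (T v)), hΨ_eq s hs v,
    ouProcess_eq_integral]
  abel

end Solution

end OrnsteinUhlenbeck

/-- The Grassmann Ornstein–Uhlenbeck process.  Given a Grassmann white
noise `Ξ` on `L²(ℝ; V)`, an initial condition `Ψ₀` compatible with it, and a drift matrix
`T`, the explicit formula `Ψ_t(v) = Ψ₀(e^{tT} v) + Ξ(1_{[0,t]} e^{(t−·)T} v)` defines the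
unique continuous solution of the linear Grassmann SDE
`Ψ_t(v) = Ψ₀(v) + ∫₀ᵗ Ψ_s(Tv) ds + B_t(v)` with `B_t(v) = Ξ(1_{[0,t]} ⊗ v)`;
moreover each `Ψ_t` has square-zero values (so extends to an algebra homomorphism on `ΛV`). -/
theorem stmt_5 {V : Type*} [NormedAddCommGroup V] [InnerProductSpace ℝ V]
    [FiniteDimensional ℝ V]
    {H : Type*} [NormedAddCommGroup H] [InnerProductSpace ℂ H] [CompleteSpace H]
    (T : V →L[ℝ] V)
    (Ξ : Lp V 2 (volume : Measure ℝ) →L[ℝ] (H →L[ℂ] H))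
    (hΞ : ∀ f g : Lp V 2 (volume : Measure ℝ), Ξ f * Ξ g = -(Ξ g * Ξ f))
    (Ψ₀ : V →L[ℝ] (H →L[ℂ] H))
    (hΨ₀ : ∀ v w : V, Ψ₀ v * Ψ₀ w = -(Ψ₀ w * Ψ₀ v))
    (hmix : ∀ (v : V) (f : Lp V 2 (volume : Measure ℝ)), Ψ₀ v * Ξ f = -(Ξ f * Ψ₀ v)) :
    -- the function `s ↦ 1_{[0,t]}(s) e^{(t−s)T} v` is square integrable …
    (∀ (t : ℝ) (v : V),
      MemLp ((Set.Icc (0 : ℝ) t).indicator fun s => NormedSpace.exp ((t - s) • T) v)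
        2 (volume : Measure ℝ)) ∧
    -- … and the process `Ψ` it defines
    ∃ Ψ : ℝ → (V →L[ℝ] (H →L[ℂ] H)),
      (∀ (t : ℝ) (v : V)
        (h : MemLp ((Set.Icc (0 : ℝ) t).indicator fun s => NormedSpace.exp ((t - s) • T) v)
          2 (volume : Measure ℝ)),
        Ψ t v = Ψ₀ (NormedSpace.exp (t • T) v) + Ξ (MemLp.toLp _ h)) ∧
      -- (a) square-zero values, hence Grassmann
      (∀ t : ℝ, 0 ≤ t → ∀ v : V, Ψ t v * Ψ t v = 0) ∧
      -- (b) continuity in operator norm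
      ContinuousOn Ψ (Set.Ici 0) ∧
      -- (c) the integral equation
      (∀ t : ℝ, 0 ≤ t → ∀ v : V,
        Ψ t v = Ψ₀ v + (∫ s in (0 : ℝ)..t, Ψ s (T v)) +
          Ξ (indicatorConstLp 2 (measurableSet_Icc (a := (0:ℝ)) (b := t))
              measure_Icc_lt_top.ne v)) ∧
      -- (d) uniqueness among continuous solutions
      (∀ Ψ' : ℝ → (V →L[ℝ] (H →L[ℂ] H)), ContinuousOn Ψ' (Set.Ici 0) →
        (∀ t : ℝ, 0 ≤ t → ∀ v : V,
          Ψ' t v = Ψ₀ v + (∫ s in (0 : ℝ)..t, Ψ' s (T v)) +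
            Ξ (indicatorConstLp 2 (measurableSet_Icc (a := (0:ℝ)) (b := t))
                measure_Icc_lt_top.ne v)) →
        ∀ t : ℝ, 0 ≤ t → Ψ' t = Ψ t) := by
  have : IsAddTorsionFree (H →L[ℂ] H) := .of_isTorsionFree ℂ _
  refine ⟨memLp_ouKernel T, ouProcess T Ψ₀ Ξ, fun _ _ _ => rfl, fun t _ v => ?_,
    (continuous_ouProcess T Ψ₀ Ξ).continuousOn, fun t _ v => ouProcess_eq_integral T Ψ₀ Ξ t v,
    fun Ψ' hΨ' hΨ'_eq t ht => eqOn_ouProcess_of_eq_integral T Ψ₀ Ξ hΨ' hΨ'_eq ht⟩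
  exact add_mul_self_eq_zero_of_anticomm (hΨ₀ _ _) (hΞ _ _) (hmix _ _)
end

section
/- Let n ≥ 1 and let A, C be real n×n matrices such that every eigenvalue μ ∈ ℂ of A (as a complex matrix) satisfies Re μ < 0, and Cᵀ = −C. Then the matrix-valued function s ↦ e^{s·Aᵀ} C e^{s·A} is Bochner integrable on [0, ∞), and the matrix C_A := ∫₀^∞ e^{s·Aᵀ} C e^{s·A} ds satisfies the Lyapunov identity Aᵀ·C_A + C_A·A = −C. -/
/-!
On a generalized eigenvector for the eigenvalue `μ`, `exp (s • A)` acts as `exp (s μ)` times a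
polynomial in `s`. The generalized eigenvectors span, and every `μ` has negative real part, so
each entry of `exp (s • A)` is `O(exp (r s))` for some `r < 0`. Hence
`G s = exp (s • Aᵀ) * C * exp (s • A)` is integrable on `[0, ∞)` and tends to `0`, and
integrating `G' = Aᵀ G + G A` over `[0, ∞)` gives `Aᵀ C_A + C_A A = -G 0 = -C`.
-/

open Matrix Filter Asymptotics Topology Finset NormedSpace MeasureTheory Set
open scoped Nat

def DecaysExponentially {E : Type*} [Norm E] (f : ℝ → E) : Prop :=
  ∃ r < 0, f =O[atTop] fun s => Real.exp (r * s)

lemma isBigO_exp_mul_of_le {r₁ r₂ : ℝ} (h : r₁ ≤ r₂) :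
    (fun s => Real.exp (r₁ * s)) =O[atTop] fun s => Real.exp (r₂ * s) :=
  IsBigO.of_bound' <| (eventually_ge_atTop 0).mono fun s hs => by
    simpa only [Real.norm_eq_abs, Real.abs_exp, Real.exp_le_exp] using
      mul_le_mul_of_nonneg_right h hs

namespace DecaysExponentially

variable {E F : Type*}

lemma zero [SeminormedAddCommGroup E] : DecaysExponentially fun _ : ℝ => (0 : E) :=
  ⟨-1, by norm_num, isBigO_zero _ _⟩

lemma of_isBigO [SeminormedAddCommGroup E] [Norm F] {f : ℝ → E} {g : ℝ → F}
    (hf : DecaysExponentially f) (h : g =O[atTop] f) : DecaysExponentially g :=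
  let ⟨r, hr, hO⟩ := hf; ⟨r, hr, h.trans hO⟩

lemma of_norm_le [SeminormedAddCommGroup E] [Norm F] {f : ℝ → E} {g : ℝ → F}
    (hf : DecaysExponentially f) (h : ∀ s, ‖g s‖ ≤ ‖f s‖) : DecaysExponentially g :=
  hf.of_isBigO (isBigO_of_le _ h)

lemma add [SeminormedAddCommGroup E] {f g : ℝ → E} (hf : DecaysExponentially f)
    (hg : DecaysExponentially g) : DecaysExponentially fun s => f s + g s := by
  obtain ⟨r₁, hr₁, hf⟩ := hf
  obtain ⟨r₂, hr₂, hg⟩ := hg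
  exact ⟨max r₁ r₂, max_lt hr₁ hr₂, (hf.trans (isBigO_exp_mul_of_le (le_max_left _ _))).add
    (hg.trans (isBigO_exp_mul_of_le (le_max_right _ _)))⟩

lemma finset_sum [SeminormedAddCommGroup E] {ι : Type*} (t : Finset ι) {f : ι → ℝ → E}
    (hf : ∀ i ∈ t, DecaysExponentially (f i)) :
    DecaysExponentially fun s => ∑ i ∈ t, f i s := by
  classical
  induction t using Finset.induction_on with
  | empty => simpa using zero
  | insert a t ha ih =>
    simp_rw [Finset.sum_insert ha]
    exact (hf a (mem_insert_self a t)).add (ih fun i hi => hf i (mem_insert_of_mem hi))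

lemma mul [SeminormedRing E] {f g : ℝ → E} (hf : DecaysExponentially f)
    (hg : DecaysExponentially g) : DecaysExponentially fun s => f s * g s := by
  obtain ⟨r₁, hr₁, hf⟩ := hf
  obtain ⟨r₂, hr₂, hg⟩ := hg
  refine ⟨r₁ + r₂, by linarith, (hf.mul hg).congr_right fun s => ?_⟩
  rw [← Real.exp_add, add_mul]

lemma const_mul [SeminormedRing E] {f : ℝ → E} (hf : DecaysExponentially f) (c : E) :
    DecaysExponentially fun s => c * f s :=
  let ⟨r, hr, hO⟩ := hf; ⟨r, hr, hO.const_mul_left c⟩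

lemma smul_const {𝕜 : Type*} [NormedField 𝕜] [SeminormedAddCommGroup E] [NormedSpace 𝕜 E]
    {f : ℝ → 𝕜} (hf : DecaysExponentially f) (w : E) :
    DecaysExponentially fun s => f s • w :=
  hf.of_isBigO <| isBigO_of_le' _ fun s => by rw [norm_smul, mul_comm]

lemma tendsto_zero [NormedAddCommGroup E] {f : ℝ → E} (hf : DecaysExponentially f) :
    Tendsto f atTop (𝓝 0) :=
  let ⟨_, hr, hO⟩ := hf
  hO.trans_tendsto <| Real.tendsto_exp_atBot.comp <| tendsto_id.const_mul_atTop_of_neg hr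

lemma integrableOn_Ici {f : ℝ → ℝ} (hf : DecaysExponentially f) (hc : Continuous f) (a : ℝ) :
    IntegrableOn f (Ici a) := by
  obtain ⟨r, hr, hO⟩ := hf
  rw [integrableOn_Ici_iff_integrableOn_Ioi]
  exact integrable_of_isBigO_exp_neg (neg_pos.2 hr) hc.continuousOn (by simpa using hO)

end DecaysExponentially

lemma decaysExponentially_pow_mul_cexp (m : ℕ) {μ : ℂ} (hμ : μ.re < 0) :
    DecaysExponentially fun s : ℝ => (s : ℂ) ^ m * Complex.exp (s * μ) := by
  have hpow : (fun s : ℝ => (s : ℂ) ^ m) =O[atTop] fun s => Real.exp (-(μ.re / 2) * s) :=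
    IsBigO.of_norm_left <| by
      simpa using (isLittleO_pow_exp_pos_mul_atTop m (b := -(μ.re / 2)) (by linarith)).isBigO
        |>.norm_left
  have hexp : (fun s : ℝ => Complex.exp (s * μ)) =O[atTop] fun s => Real.exp (μ.re * s) :=
    isBigO_of_le _ fun s => by simp [Complex.norm_exp, mul_comm]
  refine ⟨μ.re / 2, by linarith, (hpow.mul hexp).congr_right fun s => ?_⟩
  rw [← Real.exp_add]; ring_nf

section MatrixExp

variable {ι : Type*} [Fintype ι] [DecidableEq ι]

-- Only the proofs use this operator norm: `exp` and the statements below do not depend on it.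
attribute [local instance] Matrix.linftyOpNormedRing Matrix.linftyOpNormedAlgebra

lemma Matrix.exp_mulVec_eq_sum_of_pow_mulVec_eq_zero {X : Matrix ι ι ℂ} {v : ι → ℂ} {k : ℕ}
    (hk : (X ^ k) *ᵥ v = 0) : exp X *ᵥ v = ∑ m ∈ range k, (m ! : ℂ)⁻¹ • (X ^ m *ᵥ v) := by
  have hsum := (exp_series_hasSum_exp' (𝕂 := ℂ) X).map (mulVec.addMonoidHomLeft v)
    (continuous_id.matrix_mulVec continuous_const)
  refine hsum.unique (hasSum_sum_of_ne_finset_zero fun m hm => ?_)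
    |>.trans (sum_congr rfl fun m _ => ?_)
  · have hkm : k ≤ m := by simpa using hm
    show ((m ! : ℂ)⁻¹ • X ^ m) *ᵥ v = 0
    rw [smul_mulVec, ← Nat.sub_add_cancel hkm, pow_add, ← mulVec_mulVec, hk, mulVec_zero,
      smul_zero]
  · simp [mulVec.addMonoidHomLeft, smul_mulVec]

lemma Matrix.exp_algebraMap (c : ℂ) :
    exp (algebraMap ℂ (Matrix ι ι ℂ) c) = algebraMap ℂ _ (Complex.exp c) := by
  rw [Complex.exp_eq_exp_ℂ]
  exact (map_exp (algebraMap ℂ (Matrix ι ι ℂ)) (continuous_algebraMap ℂ _) c).symm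

lemma Matrix.exp_smul_eq_cexp_smul_exp_smul_sub (B : Matrix ι ι ℂ) (t μ : ℂ) :
    exp (t • B) = Complex.exp (t * μ) • exp (t • (B - μ • 1)) := by
  have hsplit : t • B = algebraMap ℂ _ (t * μ) + t • (B - μ • 1) := by
    rw [Algebra.algebraMap_eq_smul_one, smul_sub, smul_smul, add_sub_cancel]
  rw [hsplit, Matrix.exp_add_of_commute _ _ (Algebra.commute_algebraMap_left _ _),
    Matrix.exp_algebraMap, ← Algebra.smul_def]

lemma Matrix.exp_map_ofReal (A : Matrix ι ι ℝ) :
    exp (A.map Complex.ofReal) = (exp A).map Complex.ofReal :=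
  (map_exp Complex.ofRealHom.mapMatrix (continuous_id.matrix_map Complex.continuous_ofReal) A).symm

lemma hasDerivAt_exp_smul_mul_mul_exp_smul_apply (L C R : Matrix ι ι ℝ) (s : ℝ) (i j : ι) :
    HasDerivAt (fun s : ℝ => (exp (s • L) * C * exp (s • R)) i j)
      ((L * (exp (s • L) * C * exp (s • R)) + exp (s • L) * C * exp (s • R) * R) i j) s := by
  have hderiv := ((hasDerivAt_exp_smul_const' (𝕂 := ℝ) L s).mul_const C).mul
    (hasDerivAt_exp_smul_const (𝕂 := ℝ) R s)
  refine (entryLinearMap ℝ ℝ i j).toContinuousLinearMap.hasFDerivAt.comp_hasDerivAt s hderiv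
    |>.congr_deriv ?_
  simp only [mul_assoc]
  rfl

end MatrixExp

section Decay

variable {ι : Type*} [Fintype ι] [DecidableEq ι]

lemma Matrix.isRoot_charpoly_of_mem_maxGenEigenspace {K : Type*} [Field K] {B : Matrix ι ι K}
    {μ : K} {v : ι → K} (hv : v ∈ Module.End.maxGenEigenspace (toLin' B) μ) (hv0 : v ≠ 0) :
    B.charpoly.IsRoot μ := by
  rw [Module.End.maxGenEigenspace_eq_genEigenspace_finrank] at hv
  have : Module.End.HasGenEigenvalue (toLin' B) μ (Module.finrank K (ι → K)) :=
    (Submodule.ne_bot_iff _).2 ⟨v, hv, hv0⟩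
  rw [← charpoly_toLin', ← Module.End.hasEigenvalue_iff_isRoot_charpoly]
  exact Module.End.hasEigenvalue_of_hasGenEigenvalue this

lemma decaysExponentially_exp_smul_mulVec_of_mem_maxGenEigenspace {B : Matrix ι ι ℂ} {μ : ℂ}
    (hμ : μ.re < 0) {v : ι → ℂ} (hv : v ∈ Module.End.maxGenEigenspace (toLin' B) μ) :
    DecaysExponentially fun s : ℝ => exp (s • B) *ᵥ v := by
  obtain ⟨k, hk⟩ := (Module.End.mem_maxGenEigenspace _ _ _).1 hv
  set N := B - μ • 1
  have hNk : (N ^ k) *ᵥ v = 0 := by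
    rwa [show toLin' B - μ • 1 = toLinAlgEquiv' N by simp [N]; rfl, ← map_pow,
      toLinAlgEquiv'_apply] at hk
  have hexpand : (fun s : ℝ => exp (s • B) *ᵥ v) = fun s : ℝ =>
      ∑ m ∈ range k, ((s : ℂ) ^ m * Complex.exp (s * μ)) • ((m ! : ℂ)⁻¹ • (N ^ m *ᵥ v)) := by
    ext1 s
    have hsNk : ((s : ℂ) • N) ^ k *ᵥ v = 0 := by rw [smul_pow, smul_mulVec, hNk, smul_zero]
    rw [← Complex.coe_smul, exp_smul_eq_cexp_smul_exp_smul_sub B _ μ, smul_mulVec,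
      exp_mulVec_eq_sum_of_pow_mulVec_eq_zero hsNk, smul_sum]
    refine sum_congr rfl fun m _ => ?_
    rw [smul_pow, smul_mulVec, smul_smul, smul_smul, smul_smul]
    ring_nf
  rw [hexpand]
  exact .finset_sum _ fun m _ => (decaysExponentially_pow_mul_cexp m hμ).smul_const _

lemma decaysExponentially_exp_smul_apply {B : Matrix ι ι ℂ}
    (hB : ∀ μ, B.charpoly.IsRoot μ → μ.re < 0) (i j : ι) :
    DecaysExponentially fun s : ℝ => exp (s • B) i j := by
  have hv : Pi.single j 1 ∈ ⨆ μ, Module.End.maxGenEigenspace (toLin' B) μ := by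
    rw [Module.End.iSup_maxGenEigenspace_eq_top]; trivial
  have hdecay : DecaysExponentially fun s : ℝ => exp (s • B) *ᵥ Pi.single j 1 := by
    refine Submodule.iSup_induction _ (motive := fun v => DecaysExponentially fun s : ℝ =>
      exp (s • B) *ᵥ v) hv (fun μ v hv => ?_) (by simpa using .zero)
      (fun v w hv hw => by simpa only [mulVec_add] using hv.add hw)
    rcases eq_or_ne v 0 with rfl | hv0
    · simpa using .zero
    exact decaysExponentially_exp_smul_mulVec_of_mem_maxGenEigenspace
      (hB μ (isRoot_charpoly_of_mem_maxGenEigenspace hv hv0)) hv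
  refine hdecay.of_norm_le fun s => ?_
  simpa [mulVec_single_one] using norm_le_pi_norm (exp (s • B) *ᵥ Pi.single j 1) i

lemma decaysExponentially_real_exp_smul_apply {A : Matrix ι ι ℝ}
    (hA : ∀ μ : ℂ, (A.map Complex.ofReal).charpoly.IsRoot μ → μ.re < 0) (i j : ι) :
    DecaysExponentially fun s : ℝ => exp (s • A) i j := by
  refine (decaysExponentially_exp_smul_apply hA i j).of_norm_le fun s => le_of_eq ?_
  rw [show s • A.map Complex.ofReal = (s • A).map Complex.ofReal by ext; simp,
    exp_map_ofReal, map_apply, Complex.norm_real]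

lemma DecaysExponentially.transpose_mul_mul_apply {m n : Type*} [Fintype m]
    {F : ℝ → Matrix m n ℝ} (hF : ∀ i j, DecaysExponentially fun s => F s i j)
    (C : Matrix m m ℝ) (i j : n) :
    DecaysExponentially fun s => ((F s)ᵀ * C * F s) i j := by
  have hexpand : (fun s => ((F s)ᵀ * C * F s) i j) =
      fun s => ∑ l, ∑ k, C k l * (F s k i * F s l j) := by
    ext s
    simp only [mul_apply, transpose_apply, sum_mul]
    exact sum_congr rfl fun l _ => sum_congr rfl fun k _ => by ring
  rw [hexpand]
  exact .finset_sum _ fun l _ => .finset_sum _ fun k _ => ((hF k i).mul (hF l j)).const_mul _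

end Decay

section Integral

variable {α l m n : Type*} [MeasurableSpace α] [Fintype m] {μ : Measure α}

lemma integrable_const_matrix_mul_apply (L : Matrix l m ℝ) {G : α → Matrix m n ℝ}
    (hG : ∀ i j, Integrable (fun s => G s i j) μ) (i : l) (j : n) :
    Integrable (fun s => (L * G s) i j) μ := by
  simp only [mul_apply]
  exact integrable_finsetSum _ fun k _ => (hG k j).const_mul _

lemma integrable_matrix_mul_const_apply (R : Matrix m n ℝ) {G : α → Matrix l m ℝ}
    (hG : ∀ i j, Integrable (fun s => G s i j) μ) (i : l) (j : n) :
    Integrable (fun s => (G s * R) i j) μ := by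
  simp only [mul_apply]
  exact integrable_finsetSum _ fun k _ => (hG i k).mul_const _

lemma integral_const_matrix_mul_apply (L : Matrix l m ℝ) {G : α → Matrix m n ℝ}
    (hG : ∀ i j, Integrable (fun s => G s i j) μ) (i : l) (j : n) :
    ∫ s, (L * G s) i j ∂μ = (L * of fun i j => ∫ s, G s i j ∂μ) i j := by
  simp only [mul_apply, of_apply]
  rw [integral_finsetSum _ fun k _ => (hG k j).const_mul _]
  simp_rw [integral_const_mul]

lemma integral_matrix_mul_const_apply (R : Matrix m n ℝ) {G : α → Matrix l m ℝ}
    (hG : ∀ i j, Integrable (fun s => G s i j) μ) (i : l) (j : n) :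
    ∫ s, (G s * R) i j ∂μ = ((of fun i j => ∫ s, G s i j ∂μ) * R) i j := by
  simp only [mul_apply, of_apply]
  rw [integral_finsetSum _ fun k _ => (hG i k).mul_const _]
  simp_rw [integral_mul_const]

lemma mul_integral_add_integral_mul_of_hasDerivAt [Fintype n] {L : Matrix m m ℝ}
    {R : Matrix n n ℝ} {G : ℝ → Matrix m n ℝ}
    (hderiv : ∀ s i j, HasDerivAt (fun s => G s i j) ((L * G s + G s * R) i j) s)
    (hint : ∀ i j, IntegrableOn (fun s => G s i j) (Ici 0))
    (hlim : ∀ i j, Tendsto (fun s => G s i j) atTop (𝓝 0)) :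
    L * (of fun i j => ∫ s in Ici 0, G s i j) + (of fun i j => ∫ s in Ici 0, G s i j) * R
      = -G 0 := by
  simp only [integral_Ici_eq_integral_Ioi]
  ext i j
  have hint' : ∀ i j, IntegrableOn (fun s => G s i j) (Ioi 0) :=
    fun i j => (hint i j).mono_set Ioi_subset_Ici_self
  have hFTC := integral_Ioi_of_hasDerivAt_of_tendsto' (fun s _ => hderiv s i j)
    ((integrable_const_matrix_mul_apply L hint' i j).add
      (integrable_matrix_mul_const_apply R hint' i j)) (hlim i j)
  simp_rw [Matrix.add_apply] at hFTC
  rw [integral_add (integrable_const_matrix_mul_apply L hint' i j)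
    (integrable_matrix_mul_const_apply R hint' i j), integral_const_matrix_mul_apply L hint',
    integral_matrix_mul_const_apply R hint'] at hFTC
  rw [neg_apply, ← zero_sub, ← hFTC, Matrix.add_apply]

end Integral

theorem stmt_7_general {n : ℕ} (A C : Matrix (Fin n) (Fin n) ℝ)
    (hA : ∀ μ : ℂ, ((A.map Complex.ofReal).charpoly).IsRoot μ → μ.re < 0) :
    (∀ i j : Fin n, MeasureTheory.IntegrableOn
      (fun s : ℝ => (NormedSpace.exp (s • Aᵀ) * C * NormedSpace.exp (s • A)) i j)
      (Set.Ici 0)) ∧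
    Aᵀ * (Matrix.of fun i j : Fin n =>
        ∫ s in Set.Ici (0 : ℝ), (NormedSpace.exp (s • Aᵀ) * C * NormedSpace.exp (s • A)) i j) +
      (Matrix.of fun i j : Fin n =>
        ∫ s in Set.Ici (0 : ℝ), (NormedSpace.exp (s • Aᵀ) * C * NormedSpace.exp (s • A)) i j) * A
      = -C := by
  have hderiv := hasDerivAt_exp_smul_mul_mul_exp_smul_apply Aᵀ C A
  have hdecay : ∀ i j, DecaysExponentially fun s : ℝ => (exp (s • Aᵀ) * C * exp (s • A)) i j := by
    simpa only [← transpose_smul, exp_transpose] using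
      DecaysExponentially.transpose_mul_mul_apply (decaysExponentially_real_exp_smul_apply hA) C
  have hint : ∀ i j, IntegrableOn (fun s : ℝ => (exp (s • Aᵀ) * C * exp (s • A)) i j) (Ici 0) :=
    fun i j => (hdecay i j).integrableOn_Ici
      (continuous_iff_continuousAt.2 fun s => (hderiv s i j).continuousAt) 0
  refine ⟨hint, ?_⟩
  simpa using mul_integral_add_integral_mul_of_hasDerivAt hderiv hint
    fun i j => (hdecay i j).tendsto_zero

/-- The Lyapunov identity for the stationary Grassmann Ornstein–Uhlenbeck
covariance: if all complex eigenvalues of `A` have negative real part and `Cᵀ = −C`, then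
`s ↦ e^{sAᵀ} C e^{sA}` is integrable on `[0, ∞)` (entrywise, equivalently in the Bochner
sense) and `C_A := ∫₀^∞ e^{sAᵀ} C e^{sA} ds` satisfies `Aᵀ C_A + C_A A = −C`. -/
theorem stmt_7 {n : ℕ} (hn : 1 ≤ n) (A C : Matrix (Fin n) (Fin n) ℝ)
    (hA : ∀ μ : ℂ, ((A.map Complex.ofReal).charpoly).IsRoot μ → μ.re < 0)
    (hC : Cᵀ = -C) :
    (∀ i j : Fin n, MeasureTheory.IntegrableOn
      (fun s : ℝ => (NormedSpace.exp (s • Aᵀ) * C * NormedSpace.exp (s • A)) i j)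
      (Set.Ici 0)) ∧
    Aᵀ * (Matrix.of fun i j : Fin n =>
        ∫ s in Set.Ici (0 : ℝ), (NormedSpace.exp (s • Aᵀ) * C * NormedSpace.exp (s • A)) i j) +
      (Matrix.of fun i j : Fin n =>
        ∫ s in Set.Ici (0 : ℝ), (NormedSpace.exp (s • Aᵀ) * C * NormedSpace.exp (s • A)) i j) * A
      = -C :=
  stmt_7_general A C hA
end

section
/- Let N ≥ 1. There exists a constant C > 0, depending only on N, with the following property. Let H be a complex Hilbert space, 𝒜 = B(H), M ≥ 0, T > 0, and let Φ = (Φᵗ_α)_{α ∈ {1,…,N}, t ≥ 0} be a family of elements of 𝒜 such that Φᵗ_α·Φˢ_β = −Φˢ_β·Φᵗ_α for all α, β, s, t (in particular (Φᵗ_α)² = 0, the Pauli exclusion principle), ‖Φᵗ_α‖ ≤ M for all α, t, and ‖Φᵗ_α − Φˢ_α‖ ≤ M·|t − s|^{1/2} for all α, s, t. Then for every n ≥ 4N, all times t₁, …, t_n ∈ [0, T] and all indices α₁, …, α_n ∈ {1, …, N}: ‖Φ^{t₁}_{α₁} · Φ^{t₂}_{α₂} ⋯ Φ^{t_n}_{α_n}‖_𝒜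 ≤ C^{n+1} · T^{n/8} · Mⁿ / (n!)^{1/8}. -/
/-!
Cut `[0, T]` into `q ≈ n / (4N)` intervals of length `T / q`. By pigeonhole, any `Nq + 1` of
the factors contain two, `Φ^s_α` and `Φ^t_α`, with the same index and `|s - t| ≤ T / q`. Since
`(Φ^s_α)² = 0`, their product is `Φ^s_α (Φ^t_α - Φ^s_α)`, of norm at most `M² √(T / q)`, and
anticommutation brings the two factors next to each other at the cost of a sign. Extracting
`⌈n / 4⌉` disjoint such pairs greedily gives `‖Φ^{t₁}_{α₁} ⋯ Φ^{tₙ}_{αₙ}‖ ≤ Mⁿ (T / q)^{n/8}`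
when `T / q ≤ 1`, where the trivial bound `Mⁿ` is enough otherwise, and `T / q ≤ 8NT / n`.
Finally `n! ≤ nⁿ`.
-/

universe u

/-- A family `Φ : [0,∞) → 𝒜^N` is an anticommuting `M`-bounded family if its values pairwise
anticommute (in particular each squares to zero: Pauli exclusion principle), are bounded in
norm by `M` and are `1/2`-Hölder in time with constant `M`. -/
def AnticommFamily {A : Type*} [NormedRing A] {N : ℕ} (M : ℝ) (Φ : ℝ → Fin N → A) : Prop :=
  (∀ s t : ℝ, 0 ≤ s → 0 ≤ t → ∀ α β : Fin N, Φ t α * Φ s β = -(Φ s β * Φ t α)) ∧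
  (∀ t : ℝ, 0 ≤ t → ∀ α : Fin N, ‖Φ t α‖ ≤ M) ∧
  (∀ s t : ℝ, 0 ≤ s → 0 ≤ t → ∀ α : Fin N, ‖Φ t α - Φ s α‖ ≤ M * Real.sqrt |t - s|)

section AnticommutingProducts

variable {A : Type*} [NormedRing A]

theorem List.Perm.prod_eq_or_eq_neg_of_anticomm {l l' : List A} (h : l.Perm l')
    (hanti : ∀ x ∈ l, ∀ y ∈ l, x * y = -(y * x)) : l.prod = l'.prod ∨ l.prod = -l'.prod := by
  induction h with
  | nil => exact Or.inl rfl
  | cons x _ ih =>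
    rcases ih fun a ha b hb => hanti a (.tail _ ha) b (.tail _ hb) with h | h
    · exact Or.inl (by rw [List.prod_cons, List.prod_cons, h])
    · exact Or.inr (by rw [List.prod_cons, List.prod_cons, h, mul_neg])
  | swap x y l =>
    refine Or.inr ?_
    simp only [List.prod_cons, ← mul_assoc, hanti y (by simp) x (by simp), neg_mul]
  | trans h₁ _ ih₁ ih₂ =>
    have hanti' := fun x hx y hy => hanti x (h₁.mem_iff.mpr hx) y (h₁.mem_iff.mpr hy)
    rcases ih₁ hanti with h | h <;> rcases ih₂ hanti' with h' | h'
    · exact Or.inl (h.trans h')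
    · exact Or.inr (h.trans h')
    · exact Or.inr (by rw [h, h'])
    · exact Or.inl (by rw [h, h', neg_neg])

theorem List.Perm.norm_prod_eq_of_anticomm {l l' : List A} (h : l.Perm l')
    (hanti : ∀ x ∈ l, ∀ y ∈ l, x * y = -(y * x)) : ‖l.prod‖ = ‖l'.prod‖ := by
  rcases h.prod_eq_or_eq_neg_of_anticomm hanti with h | h <;> simp [h]

theorem List.norm_prod_le_pow {l : List A} {M : ℝ} (h1 : ‖(1 : A)‖ ≤ 1) (hM : 0 ≤ M)
    (hl : ∀ x ∈ l, ‖x‖ ≤ M) : ‖l.prod‖ ≤ M ^ l.length := by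
  induction l with
  | nil => simpa using h1
  | cons x l ih =>
    rw [List.prod_cons, List.length_cons, pow_succ']
    exact (norm_mul_le _ _).trans <| mul_le_mul (hl x (by simp))
      (ih fun y hy => hl y (.tail _ hy)) (norm_nonneg _) hM

theorem norm_mul_le_of_mul_self_eq_zero {x : A} (hx : x * x = 0) (y : A) :
    ‖x * y‖ ≤ ‖x‖ * ‖y - x‖ := by
  calc ‖x * y‖ = ‖x * (y - x)‖ := by rw [mul_sub, hx, sub_zero]
    _ ≤ ‖x‖ * ‖y - x‖ := norm_mul_le _ _

variable {ι : Type*} [DecidableEq ι] {f : ι → A} {M δ : ℝ} {m : ℕ}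

theorem norm_prod_le_of_exists_close_pair (h1 : ‖(1 : A)‖ ≤ 1) (hM : 0 ≤ M) (hδ : 0 ≤ δ)
    (hf : ∀ i, ‖f i‖ ≤ M) (hanti : ∀ i j, f i * f j = -(f j * f i))
    (hclose : ∀ s : Finset ι, m < s.card → ∃ i ∈ s, ∃ j ∈ s, i ≠ j ∧ ‖f i * f j‖ ≤ M ^ 2 * δ)
    (K : ℕ) {l : List ι} (hl : l.Nodup) (hK : m + 2 * K ≤ l.length + 1) :
    ‖(l.map f).prod‖ ≤ M ^ l.length * δ ^ K := by
  induction K generalizing l with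
  | zero =>
    simpa using List.norm_prod_le_pow (l := l.map f) h1 hM (by simp [hf])
  | succ K ih =>
    obtain ⟨i, hi, j, hj, hij, hsmall⟩ :=
      hclose l.toFinset (by rw [List.toFinset_card_of_nodup hl]; omega)
    rw [List.mem_toFinset] at hi hj
    set l' := (l.erase i).erase j
    have hperm : l.Perm (i :: j :: l') :=
      (List.perm_cons_erase hi).trans ((List.perm_cons_erase
        ((List.mem_erase_of_ne hij.symm).mpr hj)).cons i)
    have hlen : l.length = l'.length + 2 := by simpa using hperm.length_eq
    have hrest : ‖(l'.map f).prod‖ ≤ M ^ l'.length * δ ^ K :=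
      ih ((hl.erase i).erase j) (by omega)
    calc ‖(l.map f).prod‖ = ‖(f i * f j) * (l'.map f).prod‖ := by
          rw [(hperm.map f).norm_prod_eq_of_anticomm (by
            simp only [List.mem_map]
            rintro _ ⟨a, -, rfl⟩ _ ⟨b, -, rfl⟩
            exact hanti a b)]
          simp [mul_assoc]
      _ ≤ ‖f i * f j‖ * ‖(l'.map f).prod‖ := norm_mul_le _ _
      _ ≤ (M ^ 2 * δ) * (M ^ l'.length * δ ^ K) :=
          mul_le_mul hsmall hrest (norm_nonneg _) (by positivity)
      _ = M ^ l.length * δ ^ (K + 1) := by rw [hlen]; ring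

theorem norm_prod_le_rpow_of_exists_close_pair (h1 : ‖(1 : A)‖ ≤ 1) (hM : 0 ≤ M) (hδ : 0 ≤ δ)
    (hf : ∀ i, ‖f i‖ ≤ M) (hanti : ∀ i j, f i * f j = -(f j * f i))
    (hclose : ∀ s : Finset ι, m < s.card → ∃ i ∈ s, ∃ j ∈ s, i ≠ j ∧ ‖f i * f j‖ ≤ M ^ 2 * δ)
    {r : ℝ} (hr : 0 ≤ r) (K : ℕ) (hrK : r ≤ K) {l : List ι} (hl : l.Nodup)
    (hK : m + 2 * K ≤ l.length + 1) :
    ‖(l.map f).prod‖ ≤ M ^ l.length * δ ^ r := by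
  rcases le_total δ 1 with hδ1 | hδ1
  · calc ‖(l.map f).prod‖ ≤ M ^ l.length * δ ^ K :=
          norm_prod_le_of_exists_close_pair h1 hM hδ hf hanti hclose K hl hK
      _ ≤ M ^ l.length * δ ^ r := by
          rw [← Real.rpow_natCast δ K]
          exact mul_le_mul_of_nonneg_left
            (Real.rpow_le_rpow_of_exponent_ge' hδ hδ1 hr hrK) (by positivity)
  · calc ‖(l.map f).prod‖ ≤ M ^ l.length * δ ^ 0 :=
          norm_prod_le_of_exists_close_pair h1 hM hδ hf hanti hclose 0 hl (by omega)
      _ ≤ M ^ l.length * δ ^ r := by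
          rw [pow_zero]
          exact mul_le_mul_of_nonneg_left (Real.one_le_rpow hδ1 hr) (by positivity)

end AnticommutingProducts

theorem abs_sub_le_one_of_min_floor_eq {q : ℕ} (hq : 1 ≤ q) {u v : ℝ}
    (hu : u ∈ Set.Icc (0 : ℝ) q) (hv : v ∈ Set.Icc (0 : ℝ) q)
    (h : min ⌊u⌋₊ (q - 1) = min ⌊v⌋₊ (q - 1)) : |u - v| ≤ 1 := by
  have bounds : ∀ w ∈ Set.Icc (0 : ℝ) q,
      ((min ⌊w⌋₊ (q - 1) : ℕ) : ℝ) ≤ w ∧ w ≤ (min ⌊w⌋₊ (q - 1) : ℕ) + 1 := by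
    rintro w ⟨hw0, hwq⟩
    refine ⟨(Nat.cast_le.mpr (min_le_left _ _)).trans (Nat.floor_le hw0), ?_⟩
    rcases le_total ⌊w⌋₊ (q - 1) with hle | hle
    · rw [min_eq_left hle]
      exact (Nat.lt_floor_add_one w).le
    · rw [min_eq_right hle, Nat.cast_sub hq, Nat.cast_one, sub_add_cancel]
      exact hwq
  obtain ⟨hu₁, hu₂⟩ := bounds u hu
  obtain ⟨hv₁, hv₂⟩ := bounds v hv
  rw [h] at hu₁ hu₂
  exact abs_sub_le_iff.mpr ⟨by linarith, by linarith⟩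

theorem exists_ne_eq_abs_sub_le_of_card_lt {ι κ : Type*} [Fintype κ] [DecidableEq κ]
    (α : ι → κ) {T : ℝ} (hT : 0 < T) {t : ι → ℝ} (ht : ∀ i, t i ∈ Set.Icc 0 T) {q : ℕ}
    (hq : 1 ≤ q) {s : Finset ι} (hs : Fintype.card κ * q < s.card) :
    ∃ i ∈ s, ∃ j ∈ s, i ≠ j ∧ α i = α j ∧ |t i - t j| ≤ T / q := by
  have hq' : (0 : ℝ) < q := by exact_mod_cast hq
  set u : ι → ℝ := fun i => t i * q / T
  have hu : ∀ i, u i ∈ Set.Icc (0 : ℝ) q := fun i =>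
    ⟨by have := (ht i).1; positivity,
      by rw [div_le_iff₀ hT]; nlinarith [(ht i).2]⟩
  obtain ⟨i, hi, j, hj, hij, hbox⟩ :=
    Finset.exists_ne_map_eq_of_card_lt_of_maps_to
      (t := (Finset.univ : Finset κ) ×ˢ Finset.range q)
      (f := fun i => (α i, min ⌊u i⌋₊ (q - 1))) (by simpa using hs)
      (fun i _ => by simp; omega)
  refine ⟨i, hi, j, hj, hij, congrArg Prod.fst hbox, ?_⟩
  have huv := abs_sub_le_one_of_min_floor_eq hq (hu i) (hu j) (congrArg Prod.snd hbox)
  have hscale : t i - t j = (u i - u j) * (T / q) := by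
    simp only [u]
    field_simp
  rw [hscale, abs_mul, abs_of_pos (div_pos hT hq')]
  exact mul_le_of_le_one_left (div_pos hT hq').le huv

theorem rpow_div_le_pow_mul_rpow_div_factorial_rpow {c T r : ℝ} (hc : 1 ≤ c) (hT : 0 ≤ T)
    (hr₀ : 0 ≤ r) (hr₁ : r ≤ 1) (n : ℕ) :
    (c * T / n) ^ ((n : ℝ) * r) ≤
      c ^ (n + 1) * T ^ ((n : ℝ) * r) / (n.factorial : ℝ) ^ r := by
  have hfact : (n.factorial : ℝ) ^ r ≤ (n : ℝ) ^ ((n : ℝ) * r) := by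
    rw [Real.rpow_mul n.cast_nonneg, Real.rpow_natCast]
    gcongr
    exact_mod_cast n.factorial_le_pow
  have hcpow : c ^ ((n : ℝ) * r) ≤ c ^ (n + 1) := by
    rw [← Real.rpow_natCast]
    apply Real.rpow_le_rpow_of_exponent_le hc
    push_cast
    nlinarith
  rw [Real.div_rpow (by positivity) n.cast_nonneg, Real.mul_rpow (by positivity) hT]
  gcongr

theorem AnticommFamily.norm_mul_le {A : Type*} [NormedRing A] [IsAddTorsionFree A] {N : ℕ}
    {M : ℝ} {Φ : ℝ → Fin N → A} (hΦ : AnticommFamily M Φ) {s t : ℝ} (hs : 0 ≤ s) (ht : 0 ≤ t)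
    (a : Fin N) : ‖Φ s a * Φ t a‖ ≤ M ^ 2 * √|t - s| := by
  obtain ⟨hanti, hbound, hhol⟩ := hΦ
  have hM : 0 ≤ M := (norm_nonneg _).trans (hbound s hs a)
  calc ‖Φ s a * Φ t a‖ ≤ ‖Φ s a‖ * ‖Φ t a - Φ s a‖ :=
        norm_mul_le_of_mul_self_eq_zero (self_eq_neg.mp (hanti s s hs hs a a)) _
    _ ≤ M * (M * √|t - s|) :=
        mul_le_mul (hbound s hs a) (hhol s t hs ht a) (norm_nonneg _) hM
    _ = M ^ 2 * √|t - s| := by ring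

theorem AnticommFamily.norm_prod_le {A : Type*} [NormedRing A] [IsAddTorsionFree A]
    (h1 : ‖(1 : A)‖ ≤ 1) {N : ℕ} {M T : ℝ} (hM : 0 ≤ M) (hT : 0 < T)
    {Φ : ℝ → Fin N → A} (hΦ : AnticommFamily M Φ) {n : ℕ} (hN : 1 ≤ N) (hn : 4 * N ≤ n)
    {t : Fin n → ℝ} (ht : ∀ i, t i ∈ Set.Icc 0 T) (α : Fin n → Fin N) :
    ‖(List.ofFn fun i => Φ (t i) (α i)).prod‖ ≤ M ^ n * (8 * N * T / n) ^ ((n : ℝ) / 8) := by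
  set q := n / (4 * N)
  have hq : 1 ≤ q := (Nat.one_le_div_iff (by omega)).mpr hn
  have hq' : (0 : ℝ) < q := by exact_mod_cast hq
  have hNq : 4 * (N * q) ≤ n := by rw [← mul_assoc]; exact Nat.mul_div_le n (4 * N)
  have hnq : (n : ℝ) ≤ 8 * N * q := by
    have hlt : n < 4 * N * (q + 1) := Nat.lt_mul_div_succ n (by omega)
    exact_mod_cast (by nlinarith [Nat.le_mul_of_pos_right N hq] : n ≤ 8 * N * q)
  set f : Fin n → A := fun i => Φ (t i) (α i)
  have hclose : ∀ s : Finset (Fin n), N * q < s.card →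
      ∃ i ∈ s, ∃ j ∈ s, i ≠ j ∧ ‖f i * f j‖ ≤ M ^ 2 * √(T / q) := by
    intro s hs
    obtain ⟨i, hi, j, hj, hij, hα, hdist⟩ :=
      exists_ne_eq_abs_sub_le_of_card_lt α hT ht hq (by simpa using hs)
    refine ⟨i, hi, j, hj, hij, ?_⟩
    calc ‖f i * f j‖ ≤ M ^ 2 * √|t j - t i| := by
          simpa only [f, hα] using hΦ.norm_mul_le (ht i).1 (ht j).1 (α j)
      _ ≤ M ^ 2 * √(T / q) := by
          rw [abs_sub_comm]
          gcongr
  have hprod := norm_prod_le_rpow_of_exists_close_pair h1 hM (Real.sqrt_nonneg _)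
    (fun i => hΦ.2.1 _ (ht i).1 _) (fun i j => hΦ.1 _ _ (ht j).1 (ht i).1 _ _) hclose
    (r := n / 4) (by positivity) ((n + 3) / 4)
    (by rw [div_le_iff₀ (by norm_num)]; exact_mod_cast (by omega : n ≤ (n + 3) / 4 * 4))
    (List.nodup_finRange n) (by simp only [List.length_finRange]; omega)
  rw [List.ofFn_eq_map]
  calc _ ≤ M ^ n * √(T / q) ^ ((n : ℝ) / 4) := by simpa using hprod
    _ = M ^ n * (T / q) ^ ((n : ℝ) / 8) := by
        rw [Real.sqrt_eq_rpow, ← Real.rpow_mul (by positivity)]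
        ring_nf
    _ ≤ M ^ n * (8 * N * T / n) ^ ((n : ℝ) / 8) := by
        have hn' : (0 : ℝ) < n := by exact_mod_cast (by omega : 0 < n)
        refine mul_le_mul_of_nonneg_left
          (Real.rpow_le_rpow (by positivity) ?_ (by positivity)) (by positivity)
        rw [div_le_div_iff₀ hq' hn']
        nlinarith

/-- Product estimate exploiting the Pauli exclusion principle: there is a
constant `C > 0` depending only on `N` such that for every anticommuting `M`-bounded family
`Φ` in `B(H)` and every `n ≥ 4N`, times `t₁,…,tₙ ∈ [0,T]` and indices `α₁,…,αₙ`,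
`‖Φ^{t₁}_{α₁} ⋯ Φ^{tₙ}_{αₙ}‖ ≤ C^{n+1} T^{n/8} Mⁿ / (n!)^{1/8}`. -/
theorem stmt_12 (N : ℕ) (hN : 1 ≤ N) :
    ∃ C > (0 : ℝ),
      ∀ (H : Type u) [NormedAddCommGroup H] [InnerProductSpace ℂ H] [CompleteSpace H]
        (M T : ℝ), 0 ≤ M → 0 < T →
        ∀ Φ : ℝ → Fin N → (H →L[ℂ] H), AnticommFamily M Φ →
        ∀ n : ℕ, 4 * N ≤ n →
        ∀ t : Fin n → ℝ, (∀ i, t i ∈ Set.Icc (0 : ℝ) T) →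
        ∀ α : Fin n → Fin N,
          ‖(List.ofFn fun i => Φ (t i) (α i)).prod‖ ≤
            C ^ (n + 1) * T ^ ((n : ℝ) / 8) * M ^ n / ((n.factorial : ℝ)) ^ ((1 : ℝ) / 8) := by
  have hC : (1 : ℝ) ≤ 8 * N := by
    have : (1 : ℝ) ≤ N := by exact_mod_cast hN
    linarith
  refine ⟨8 * N, by linarith, ?_⟩
  intro H _ _ _ M T hM hT Φ hΦ n hn t ht α
  have := IsAddTorsionFree.of_isTorsionFree ℂ (H →L[ℂ] H)
  calc _ ≤ M ^ n * (8 * N * T / n) ^ ((n : ℝ) / 8) :=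
        hΦ.norm_prod_le ContinuousLinearMap.norm_id_le hM hT hN hn ht α
    _ ≤ M ^ n * ((8 * N) ^ (n + 1) * T ^ ((n : ℝ) / 8) / (n.factorial : ℝ) ^ ((1 : ℝ) / 8)) := by
        gcongr
        simpa only [mul_one_div] using
          rpow_div_le_pow_mul_rpow_div_factorial_rpow hC hT.le (r := 1 / 8) (by norm_num)
            (by norm_num) n
    _ = _ := by ring
end

section
/- For every N ≥ 1 and M ≥ 0 there exist λ* > 0 and C* < ∞ with the following property. Let H be a complex Hilbert space, 𝒜 = B(H), let Φ = (Φᵗ_α) be an anticommuting M-bounded family in 𝒜, and let c = (c^α_{α₁α₂α₃}) be real coefficients with |c^α_{α₁α₂α₃}| ≤ λ* for all indices α, α₁, α₂, α₃ ∈ {1,…,N}. Then every continuous solution Ψ : [0, ∞) → 𝒜^N of the cubic Grassmann integral equation with data (Φ, c) is uniformly bounded in time: sup_{t ≥ 0} max_{α} ‖Ψᵗ_α‖_𝒜 ≤ C*. -/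
universe u

/-- `Ψ` is a (continuous) solution of the cubic Grassmann integral equation with data `(Φ, c)`:
`Ψᵗ_α = Φᵗ_α + ∫₀ᵗ e^{−(t−s)} Σ c^α_{α₁α₂α₃} Ψˢ_{α₁} Ψˢ_{α₂} Ψˢ_{α₃} ds` for `t ≥ 0`. -/
def CubicSolution {A : Type*} [NormedRing A] [NormedSpace ℝ A] [CompleteSpace A] {N : ℕ}
    (c : Fin N → Fin N → Fin N → Fin N → ℝ) (Φ : ℝ → Fin N → A) (Ψ : ℝ → Fin N → A) : Prop :=
  (∀ α : Fin N, ContinuousOn (fun t => Ψ t α) (Set.Ici 0)) ∧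
  ∀ t : ℝ, 0 ≤ t → ∀ α : Fin N,
    Ψ t α = Φ t α + ∫ s in (0 : ℝ)..t, Real.exp (-(t - s)) •
      ∑ α₁ : Fin N, ∑ α₂ : Fin N, ∑ α₃ : Fin N,
        c α α₁ α₂ α₃ • (Ψ s α₁ * Ψ s α₂ * Ψ s α₃)

/-!
On any time interval `[0, t]` on which `‖Ψ‖ ≤ M + 1`, the cubic integrand has norm at most
`N³ λ (M + 1)³`, and the kernel `e^{-(t-s)}` has total mass `1 - e^{-t} ≤ 1`; for
`λ = (2 N³ (M + 1)³)⁻¹` the equation therefore gives `‖Ψᵗ‖ ≤ M + 1/2`. Since `Ψ` is continuous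
and starts at `Φ⁰`, this improvement of the bound rules out a first time at which `‖Ψ‖`
reaches `M + 1`, so `‖Ψ‖ ≤ M + 1/2` for all times.
-/

open Set Filter Topology

theorem forall_le_of_bootstrap {g : ℝ → ℝ} {a b : ℝ} (hab : a < b) (hg : ContinuousOn g (Ici 0))
    (h0 : g 0 ≤ b)
    (hstep : ∀ t, 0 ≤ t → (∀ s ∈ Icc 0 t, g s ≤ b) → g t ≤ a) :
    ∀ t, 0 ≤ t → g t ≤ a := by
  suffices hb : ∀ t, 0 ≤ t → g t < b from
    fun t ht => hstep t ht fun s hs => (hb s hs.1).le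
  by_contra! ⟨t₁, ht₁, hbt₁⟩
  -- `τ` is the first time `g` reaches `b`
  set F := Icc 0 t₁ ∩ g ⁻¹' Ici b
  have hF : IsClosed F :=
    (hg.mono Icc_subset_Ici_self).preimage_isClosed_of_isClosed isClosed_Icc isClosed_Ici
  have hFbdd : BddBelow F := ⟨0, fun t ht => ht.1.1⟩
  set τ := sInf F
  obtain ⟨⟨hτ0, hτt₁⟩, hbτ : b ≤ g τ⟩ : τ ∈ F := hF.csInf_mem ⟨t₁, ⟨ht₁, le_rfl⟩, hbt₁⟩ hFbdd
  have before : ∀ s ∈ Ico 0 τ, g s ≤ a := fun s hs => hstep s hs.1 fun r hr => by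
    by_contra! hbr
    have : τ ≤ r := csInf_le hFbdd ⟨⟨hr.1, hr.2.trans (hs.2.le.trans hτt₁)⟩, hbr.le⟩
    linarith [hr.2, hs.2]
  have hτpos : 0 < τ := by
    refine hτ0.lt_of_ne fun hτ => ?_
    have := hstep 0 le_rfl fun s hs => by rwa [le_antisymm hs.2 hs.1]
    rw [← hτ] at hbτ
    linarith
  have hgτ : g τ ≤ a := by
    have hcont : Tendsto g (𝓝[<] τ) (𝓝 (g τ)) :=
      (hg τ hτ0).mono_of_mem_nhdsWithin
        (mem_of_superset (Ioo_mem_nhdsLT hτpos) fun s hs => mem_Ici.2 hs.1.le)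
    exact le_of_tendsto hcont (eventually_of_mem (Ioo_mem_nhdsLT hτpos)
      fun s hs => before s ⟨hs.1.le, hs.2⟩)
  linarith

theorem norm_cubic_sum_le {ι A : Type*} [Fintype ι] [NormedRing A] [NormedSpace ℝ A]
    {c : ι → ι → ι → ℝ} {x : ι → A} {lam K : ℝ} (hc : ∀ i j k, |c i j k| ≤ lam)
    (hx : ∀ i, ‖x i‖ ≤ K) :
    ‖∑ i, ∑ j, ∑ k, c i j k • (x i * x j * x k)‖ ≤ Fintype.card ι ^ 3 * lam * K ^ 3 := by
  have hterm : ∀ i j k, ‖c i j k • (x i * x j * x k)‖ ≤ lam * K ^ 3 := fun i j k => by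
    have hK : 0 ≤ K := (norm_nonneg _).trans (hx i)
    have hxxx : ‖x i * x j * x k‖ ≤ K ^ 3 :=
      norm_mul₃_le.trans (by rw [pow_succ, sq]; gcongr <;> exact hx _)
    rw [norm_smul, Real.norm_eq_abs]
    exact mul_le_mul (hc i j k) hxxx (norm_nonneg _) ((abs_nonneg _).trans (hc i j k))
  calc ‖∑ i, ∑ j, ∑ k, c i j k • (x i * x j * x k)‖
      ≤ ∑ _i : ι, ∑ _j : ι, ∑ _k : ι, lam * K ^ 3 :=
        norm_sum_le_of_le _ fun i _ => norm_sum_le_of_le _ fun j _ =>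
          norm_sum_le_of_le _ fun k _ => hterm i j k
    _ = Fintype.card ι ^ 3 * lam * K ^ 3 := by
        simp only [Finset.sum_const, Finset.card_univ, nsmul_eq_mul]
        ring

theorem norm_integral_exp_smul_le {E : Type*} [NormedAddCommGroup E] [NormedSpace ℝ E]
    {f : ℝ → E} {t B : ℝ} (ht : 0 ≤ t) (hf : ∀ s ∈ Icc 0 t, ‖f s‖ ≤ B) :
    ‖∫ s in (0 : ℝ)..t, Real.exp (-(t - s)) • f s‖ ≤ B := by
  have hB : 0 ≤ B := (norm_nonneg _).trans (hf t ⟨ht, le_rfl⟩)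
  have hkernel : ∫ s in (0 : ℝ)..t, Real.exp (-(t - s)) = 1 - Real.exp (-t) := by
    simp only [neg_sub, intervalIntegral.integral_comp_sub_right Real.exp, integral_exp]
    simp
  calc ‖∫ s in (0 : ℝ)..t, Real.exp (-(t - s)) • f s‖
      ≤ ∫ s in (0 : ℝ)..t, Real.exp (-(t - s)) * B := by
        refine intervalIntegral.norm_integral_le_of_norm_le ht
          (MeasureTheory.ae_of_all _ fun s hs => ?_)
          ((by fun_prop : Continuous fun s => Real.exp (-(t - s)) * B).intervalIntegrable _ _)
        rw [norm_smul, Real.norm_of_nonneg (Real.exp_pos _).le]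
        exact mul_le_mul_of_nonneg_left (hf s (Ioc_subset_Icc_self hs)) (Real.exp_pos _).le
    _ = (1 - Real.exp (-t)) * B := by rw [intervalIntegral.integral_mul_const, hkernel]
    _ ≤ B := mul_le_of_le_one_left hB (by linarith [Real.exp_pos (-t)])

namespace CubicSolution

variable {A : Type*} [NormedRing A] [NormedSpace ℝ A] [CompleteSpace A] {N : ℕ}
  {c : Fin N → Fin N → Fin N → Fin N → ℝ} {Φ Ψ : ℝ → Fin N → A}

theorem apply_zero (hΨ : CubicSolution c Φ Ψ) : Ψ 0 = Φ 0 := by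
  funext α
  simpa using hΨ.2 0 le_rfl α

theorem norm_apply_le (hΨ : CubicSolution c Φ Ψ) {lam K t : ℝ} (ht : 0 ≤ t)
    (hc : ∀ α α₁ α₂ α₃, |c α α₁ α₂ α₃| ≤ lam) (hK : ∀ s ∈ Icc 0 t, ‖Ψ s‖ ≤ K) (α : Fin N) :
    ‖Ψ t α‖ ≤ ‖Φ t α‖ + N ^ 3 * lam * K ^ 3 := by
  rw [hΨ.2 t ht α]
  have hcubic := fun s (hs : s ∈ Icc 0 t) =>
    norm_cubic_sum_le (hc α) fun β => (norm_le_pi_norm (Ψ s) β).trans (hK s hs)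
  rw [Fintype.card_fin] at hcubic
  exact (norm_add_le _ _).trans (add_le_add le_rfl (norm_integral_exp_smul_le ht hcubic))

end CubicSolution

/-- Uniform-in-time bound for small coupling: for every `N ≥ 1` and `M ≥ 0`
there are `λ* > 0` and `C* < ∞` such that for all coefficients bounded by `λ*`, every
continuous solution of the cubic Grassmann integral equation with anticommuting `M`-bounded
datum `Φ` satisfies `sup_{t ≥ 0} maxₐ ‖Ψᵗ_α‖ ≤ C*`. -/
theorem stmt_14 (N : ℕ) (hN : 1 ≤ N) (M : ℝ) (hM : 0 ≤ M) :
    ∃ lamStar > (0 : ℝ), ∃ Cstar : ℝ,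
      ∀ (H : Type u) [NormedAddCommGroup H] [InnerProductSpace ℂ H] [CompleteSpace H]
        (Φ : ℝ → Fin N → (H →L[ℂ] H)), AnticommFamily M Φ →
        ∀ c : Fin N → Fin N → Fin N → Fin N → ℝ,
          (∀ α α₁ α₂ α₃, |c α α₁ α₂ α₃| ≤ lamStar) →
        ∀ Ψ : ℝ → Fin N → (H →L[ℂ] H), CubicSolution c Φ Ψ →
        ∀ t : ℝ, 0 ≤ t → ∀ α : Fin N, ‖Ψ t α‖ ≤ Cstar := by
  have hN' : (0 : ℝ) < N := by exact_mod_cast hN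
  refine ⟨(2 * N ^ 3 * (M + 1) ^ 3)⁻¹, by positivity, M + 1 / 2, ?_⟩
  intro H _ _ _ Φ hΦ c hc Ψ hΨ
  have hsmall : (N : ℝ) ^ 3 * (2 * N ^ 3 * (M + 1) ^ 3)⁻¹ * (M + 1) ^ 3 = 1 / 2 := by
    field_simp
  have hbound : ∀ t, 0 ≤ t → ‖Ψ t‖ ≤ M + 1 / 2 := by
    refine forall_le_of_bootstrap (b := M + 1) (by linarith) (continuousOn_pi.2 hΨ.1).norm ?_
      fun t ht hK => ?_
    · rw [hΨ.apply_zero]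
      exact (pi_norm_le_iff_of_nonneg (by linarith)).2 fun α =>
        (hΦ.2.1 0 le_rfl α).trans (by linarith)
    · refine (pi_norm_le_iff_of_nonneg (by linarith)).2 fun α => ?_
      linarith [hΨ.norm_apply_le ht hc hK α, hΦ.2.1 t ht α]
  exact fun t ht α => (norm_le_pi_norm (Ψ t) α).trans (hbound t ht)
end

section
/- Let X be a real Banach space, U ⊆ ℝ an open neighborhood of 0, and (Z_n)_{n∈ℕ} a sequence of functions Z_n : U → X, each real analytic on U, converging pointwise on U to a function Z : U → X. Suppose there is a function K : U → ℝ, real analytic at 0, such that for every k ∈ ℕ the k-th derivative of K at 0 is nonnegative, and ‖(d^k Z_n/dλ^k)(0)‖_X ≤ (d^k K/dλ^k)(0) for all n and k. Then Z is real analytic on some neighborhood of 0, and ‖(d^k Z/dλ^k)(0)‖_X ≤ (d^k K/dλ^k)(0) for all k ∈ ℕ. -/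
/-!
Near `0` every `Z n` is the sum of its Taylor series `∑ bₙₖ tᵏ`, and `‖bₙₖ‖` is bounded by the
absolute value of the `k`-th Taylor coefficient of `K`, uniformly in `n`. Writing
`Z n t = bₙ₀ + t • Tₙ(t)`, the remainder `Tₙ(t)` is bounded uniformly in `n` and `t`, so `bₙ₀` is
the uniform limit, as `t → 0⁺`, of the convergent sequences `Z n t`, hence converges; applying
this to the shifted series `Tₙ` and inducting, every Taylor coefficient converges. Dominated
convergence for series then shows that `Zlim` is the sum of the limiting power series, and the
bounds on derivatives at `0` pass to the limit.
-/

open Filter Set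
open scoped NNReal ENNReal Topology Nat

theorem TendstoUniformly.cauchySeq {α ι : Type*} [PseudoMetricSpace α] {l : Filter ι} [l.NeBot]
    {v : ι → ℕ → α} {u : ℕ → α} (h : TendstoUniformly v u l) (hv : ∀ᶠ i in l, CauchySeq (v i)) :
    CauchySeq u := by
  rw [Metric.cauchySeq_iff']
  intro ε hε
  obtain ⟨i, hi, hvi⟩ := ((Metric.tendstoUniformly_iff.mp h (ε / 3) (by positivity)).and hv).exists
  obtain ⟨N, hN⟩ := Metric.cauchySeq_iff'.mp hvi (ε / 3) (by positivity)
  refine ⟨N, fun n hn => ?_⟩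
  calc dist (u n) (u N) ≤ dist (u n) (v i n) + dist (v i n) (v i N) + dist (v i N) (u N) :=
        dist_triangle4 _ _ _ _
    _ < ε / 3 + ε / 3 + ε / 3 := by
        gcongr
        · exact hi n
        · exact hN n hn
        · exact dist_comm (u N) (v i N) ▸ hi N
    _ = ε := by ring

namespace FormalMultilinearSeries

variable {𝕜 E F G : Type*} [NontriviallyNormedField 𝕜] [NormedAddCommGroup E] [NormedSpace 𝕜 E]
  [NormedAddCommGroup F] [NormedSpace 𝕜 F] [NormedAddCommGroup G] [NormedSpace 𝕜 G]

theorem radius_le_radius_of_norm_le {p : FormalMultilinearSeries 𝕜 E F}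
    {q : FormalMultilinearSeries 𝕜 E G}
    (h : ∀ n, ‖q n‖ ≤ ‖p n‖) : p.radius ≤ q.radius := by
  refine ENNReal.le_of_forall_nnreal_lt fun r hr => ?_
  obtain ⟨C, -, hC⟩ := p.norm_mul_pow_le_of_lt_radius hr
  exact q.le_radius_of_bound C fun n =>
    (mul_le_mul_of_nonneg_right (h n) (by positivity)).trans (hC n)

variable (𝕜) in
def ofCoeffs (c : ℕ → F) : FormalMultilinearSeries 𝕜 𝕜 F :=
  fun n => ContinuousMultilinearMap.mkPiRing 𝕜 (Fin n) (c n)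

@[simp]
theorem coeff_ofCoeffs (c : ℕ → F) (n : ℕ) : (ofCoeffs 𝕜 c).coeff n = c n := by
  simp [ofCoeffs, coeff]

end FormalMultilinearSeries

open FormalMultilinearSeries

theorem HasFPowerSeriesAt.iteratedDeriv_eq_factorial_smul_coeff {𝕜 F : Type*}
    [NontriviallyNormedField 𝕜] [NormedAddCommGroup F] [NormedSpace 𝕜 F] [CompleteSpace F]
    {f : 𝕜 → F} {p : FormalMultilinearSeries 𝕜 𝕜 F} {x : 𝕜} (h : HasFPowerSeriesAt f p x)
    (k : ℕ) : iteratedDeriv k f x = k ! • p.coeff k := by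
  obtain ⟨r, hr⟩ := h
  rw [iteratedDeriv_eq_iteratedFDeriv, ← hr.factorial_smul 1 k, apply_eq_pow_smul_coeff,
    one_pow, one_smul]

theorem HasFPowerSeriesAt.norm_iteratedDeriv_eq {𝕜 F : Type*} [RCLike 𝕜] [NormedAddCommGroup F]
    [NormedSpace 𝕜 F] [CompleteSpace F] {f : 𝕜 → F} {p : FormalMultilinearSeries 𝕜 𝕜 F} {x : 𝕜}
    (h : HasFPowerSeriesAt f p x) (k : ℕ) : ‖iteratedDeriv k f x‖ = k ! * ‖p.coeff k‖ := by
  rw [h.iteratedDeriv_eq_factorial_smul_coeff, RCLike.norm_nsmul 𝕜, nsmul_eq_mul]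

theorem IsOpen.exists_nnreal_lt_ball_subset {α : Type*} [PseudoMetricSpace α] {U : Set α} {x : α}
    (hU : IsOpen U) (hx : x ∈ U) {ρ : ℝ≥0∞} (hρ : 0 < ρ) :
    ∃ r : ℝ≥0, 0 < r ∧ (r : ℝ≥0∞) < ρ ∧ Metric.ball x r ⊆ U := by
  obtain ⟨ε, hε, hεU⟩ := Metric.isOpen_iff.mp hU x hx
  obtain ⟨r, hr0, hr⟩ := ENNReal.lt_iff_exists_nnreal_btwn.mp
    (lt_min hρ (ENNReal.ofReal_pos.mpr hε))
  refine ⟨r, ENNReal.coe_pos.mp hr0, hr.trans_le (min_le_left _ _), ?_⟩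
  rw [← Metric.eball_ofReal] at hεU
  rw [← Metric.eball_coe]
  exact (Metric.eball_subset_eball (hr.le.trans (min_le_right _ _))).trans hεU

theorem AnalyticOnNhd.hasFPowerSeriesOnBall_of_le_radius {E F : Type*} [NormedAddCommGroup E]
    [NormedSpace ℝ E] [NormedAddCommGroup F] [NormedSpace ℝ F] [CompleteSpace F] {f : E → F}
    {p : FormalMultilinearSeries ℝ E F} {x : E} {r : ℝ≥0∞}
    (hf : AnalyticOnNhd ℝ f (Metric.eball x r)) (hp : HasFPowerSeriesAt f p x) (hr0 : 0 < r)
    (hr : r ≤ p.radius) : HasFPowerSeriesOnBall f p x r := by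
  have hsum : HasFPowerSeriesOnBall (fun z => p.sum (z - x)) p x r := by
    simpa using ((p.hasFPowerSeriesOnBall (hr0.trans_le hr)).mono hr0 hr).comp_sub x
  have hev : f =ᶠ[𝓝 x] fun z => p.sum (z - x) := by
    filter_upwards [hp.eventually_hasSum_sub, hsum.hasFPowerSeriesAt.eventually_hasSum_sub]
      with z hfz hsz
    exact hfz.unique hsz
  exact hsum.congr (hf.eqOn_of_preconnected_of_eventuallyEq hsum.analyticOnNhd
    (convex_eball x r).isPreconnected (Metric.mem_eball_self hr0) hev).symm

section MajorizedCoefficients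

variable {X : Type*} [NormedAddCommGroup X] [NormedSpace ℝ X] {a : ℕ → ℝ} {R t : ℝ}

theorem norm_pow_smul_le {b : X} {a : ℝ} (hb : ‖b‖ ≤ a) (ht : |t| ≤ R) (j : ℕ) :
    ‖t ^ j • b‖ ≤ a * R ^ j := by
  rw [norm_smul, norm_pow, Real.norm_eq_abs, mul_comm]
  exact mul_le_mul hb (pow_le_pow_left₀ (abs_nonneg t) ht j) (by positivity)
    ((norm_nonneg b).trans hb)

theorem summable_pow_smul_of_norm_le [CompleteSpace X] {b : ℕ → X} (hb : ∀ j, ‖b j‖ ≤ a j)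
    (ha : Summable fun j => a j * R ^ j) (ht : |t| ≤ R) : Summable fun j => t ^ j • b j :=
  ha.of_norm_bounded fun j => norm_pow_smul_le (hb j) ht j

theorem norm_tsum_pow_smul_le {b : ℕ → X} (hb : ∀ j, ‖b j‖ ≤ a j)
    (ha : Summable fun j => a j * R ^ j) (ht : |t| ≤ R) :
    ‖∑' j, t ^ j • b j‖ ≤ ∑' j, a j * R ^ j :=
  tsum_of_norm_bounded ha.hasSum fun j => norm_pow_smul_le (hb j) ht j

theorem Summable.succ_mul_pow (ha : Summable fun j => a j * R ^ j) (hR : R ≠ 0) :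
    Summable fun j => a (j + 1) * R ^ j :=
  (((summable_nat_add_iff 1).mpr ha).div_const R).congr fun j => by
    rw [pow_succ]; field_simp

theorem tsum_pow_smul_eq_add_smul_tsum {b : ℕ → X} (hs : Summable fun j => t ^ j • b j) :
    ∑' j, t ^ j • b j = b 0 + t • ∑' j, t ^ j • b (j + 1) := by
  rw [hs.tsum_eq_zero_add, ← tsum_const_smul'' t]
  simp [pow_succ, mul_smul, smul_comm t]

variable [CompleteSpace X] {b : ℕ → ℕ → X}

theorem exists_tendsto_coeff_zero (hR : 0 < R) (hb : ∀ n j, ‖b n j‖ ≤ a j)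
    (ha : Summable fun j => a j * R ^ j)
    (hconv : ∀ t ∈ Ioo 0 R, ∃ g, Tendsto (fun n => ∑' j, t ^ j • b n j) atTop (𝓝 g)) :
    ∃ c, Tendsto (fun n => b n 0) atTop (𝓝 c) := by
  set C := ∑' j, a (j + 1) * R ^ j
  have hunif :
      TendstoUniformly (fun t n => ∑' j, t ^ j • b n j) (fun n => b n 0) (𝓝[>] (0 : ℝ)) := by
    rw [Metric.tendstoUniformly_iff]
    intro ε hε
    have hC : Tendsto (fun t : ℝ => t * C) (𝓝[>] 0) (𝓝 0) :=
      tendsto_nhdsWithin_of_tendsto_nhds ((continuous_id.mul continuous_const).tendsto' 0 0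
        (zero_mul C))
    filter_upwards [Ioo_mem_nhdsGT hR, hC.eventually (gt_mem_nhds hε)] with t ht htC n
    have htR : |t| ≤ R := (abs_of_pos ht.1).trans_le ht.2.le
    rw [dist_eq_norm, tsum_pow_smul_eq_add_smul_tsum (summable_pow_smul_of_norm_le (hb n) ha htR),
      sub_add_cancel_left, norm_neg, norm_smul, Real.norm_of_nonneg ht.1.le]
    exact (mul_le_mul_of_nonneg_left (norm_tsum_pow_smul_le (fun j => hb n (j + 1))
      (ha.succ_mul_pow hR.ne') htR) ht.1.le).trans_lt htC
  refine cauchySeq_tendsto_of_complete (hunif.cauchySeq ?_)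
  filter_upwards [Ioo_mem_nhdsGT hR] with t ht
  obtain ⟨g, hg⟩ := hconv t ht
  exact hg.cauchySeq

theorem exists_tendsto_coeff (hR : 0 < R) (hb : ∀ n j, ‖b n j‖ ≤ a j)
    (ha : Summable fun j => a j * R ^ j)
    (hconv : ∀ t ∈ Ioo 0 R, ∃ g, Tendsto (fun n => ∑' j, t ^ j • b n j) atTop (𝓝 g)) (k : ℕ) :
    ∃ c, Tendsto (fun n => b n k) atTop (𝓝 c) := by
  induction k generalizing a b with
  | zero => exact exists_tendsto_coeff_zero hR hb ha hconv
  | succ k ih =>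
    obtain ⟨c₀, hc₀⟩ := exists_tendsto_coeff_zero hR hb ha hconv
    refine ih (b := fun n j => b n (j + 1)) (fun n j => hb n (j + 1)) (ha.succ_mul_pow hR.ne')
      fun t ht => ?_
    obtain ⟨g, hg⟩ := hconv t ht
    have htR : |t| ≤ R := (abs_of_pos ht.1).trans_le ht.2.le
    have hshift : ∀ n, ∑' j, t ^ j • b n (j + 1) = t⁻¹ • (∑' j, t ^ j • b n j - b n 0) := by
      intro n
      rw [tsum_pow_smul_eq_add_smul_tsum (summable_pow_smul_of_norm_le (hb n) ha htR),
        add_sub_cancel_left, smul_smul, inv_mul_cancel₀ ht.1.ne', one_smul]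
    exact ⟨t⁻¹ • (g - c₀), ((hg.sub hc₀).const_smul t⁻¹).congr fun n => (hshift n).symm⟩

end MajorizedCoefficients

theorem hasFPowerSeriesOnBall_ofCoeffs {X : Type*} [NormedAddCommGroup X] [NormedSpace ℝ X]
    {c : ℕ → X} {g : ℝ → X} {a : ℕ → ℝ} {r : ℝ≥0} (hr : 0 < (r : ℝ≥0∞))
    (hc : ∀ k, ‖c k‖ ≤ a k) (ha : Summable fun k => a k * (r : ℝ) ^ k)
    (hg : ∀ x ∈ Metric.ball (0 : ℝ) r, HasSum (fun k => x ^ k • c k) (g x)) :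
    HasFPowerSeriesOnBall g (ofCoeffs ℝ c) 0 r := by
  have hrad : (r : ℝ≥0∞) ≤ (ofCoeffs ℝ c).radius :=
    (ofCoeffs ℝ c).le_radius_of_summable <| ha.of_nonneg_of_le (fun _ => by positivity)
      fun k => by
        rw [norm_apply_eq_norm_coef, coeff_ofCoeffs]
        exact mul_le_mul_of_nonneg_right (hc k) (by positivity)
  refine ⟨hrad, hr, fun {y} hy => ?_⟩
  simpa using hg y (by rwa [Metric.eball_coe] at hy)

theorem exists_hasFPowerSeriesOnBall_of_tendsto {X : Type*} [NormedAddCommGroup X]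
    [NormedSpace ℝ X] [CompleteSpace X] {f : ℕ → ℝ → X} {g : ℝ → X}
    {q : ℕ → FormalMultilinearSeries ℝ ℝ X} {a : ℕ → ℝ} {r : ℝ≥0}
    (hf : ∀ n, HasFPowerSeriesOnBall (f n) (q n) 0 r) (hq : ∀ n k, ‖(q n).coeff k‖ ≤ a k)
    (ha : Summable fun k => a k * (r : ℝ) ^ k)
    (hg : ∀ x ∈ Metric.ball (0 : ℝ) r, Tendsto (fun n => f n x) atTop (𝓝 (g x))) :
    ∃ P : FormalMultilinearSeries ℝ ℝ X, HasFPowerSeriesOnBall g P 0 r ∧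
      ∀ k, Tendsto (fun n => (q n).coeff k) atTop (𝓝 (P.coeff k)) := by
  have hr : (0 : ℝ) < r := ENNReal.coe_pos.mp (hf 0).r_pos
  have hfsum :
      ∀ n, ∀ x ∈ Metric.ball (0 : ℝ) r, HasSum (fun k => x ^ k • (q n).coeff k) (f n x) :=
    fun n x hx => by simpa using (hf n).hasSum (by rwa [Metric.eball_coe])
  have hball : ∀ t ∈ Ioo 0 (r : ℝ), t ∈ Metric.ball (0 : ℝ) r := fun t ht => by
    simpa [abs_of_pos ht.1] using ht.2
  choose c hc using exists_tendsto_coeff hr hq ha fun t ht =>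
    ⟨g t, (hg t (hball t ht)).congr fun n => ((hfsum n t (hball t ht)).tsum_eq).symm⟩
  have hca : ∀ k, ‖c k‖ ≤ a k := fun k =>
    le_of_tendsto (hc k).norm (Eventually.of_forall fun n => hq n k)
  have hgc : ∀ x ∈ Metric.ball (0 : ℝ) r, HasSum (fun k => x ^ k • c k) (g x) := by
    intro x hx
    have hxr : |x| ≤ r := by
      rw [mem_ball_zero_iff, Real.norm_eq_abs] at hx
      exact hx.le
    have hlim := tendsto_tsum_of_dominated_convergence ha (fun k => (hc k).const_smul (x ^ k))
      (Eventually.of_forall fun n k => norm_pow_smul_le (hq n k) hxr k)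
    rw [← tendsto_nhds_unique hlim ((hg x hx).congr fun n => (hfsum n x hx).tsum_eq.symm)]
    exact (summable_pow_smul_of_norm_le hca ha hxr).hasSum
  exact ⟨ofCoeffs ℝ c, hasFPowerSeriesOnBall_ofCoeffs (hf 0).r_pos hca ha hgc, by simpa using hc⟩

theorem stmt_16_general {X : Type*} [NormedAddCommGroup X] [NormedSpace ℝ X] [CompleteSpace X]
    (U : Set ℝ) (hU : IsOpen U) (h0 : (0 : ℝ) ∈ U)
    (Z : ℕ → ℝ → X) (hZa : ∀ n, AnalyticOnNhd ℝ (Z n) U)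
    (Zlim : ℝ → X)
    (hconv : ∀ x ∈ U, Filter.Tendsto (fun n => Z n x) Filter.atTop (nhds (Zlim x)))
    (K : ℝ → ℝ) (hK : AnalyticAt ℝ K 0)
    (hmaj : ∀ (n : ℕ) (k : ℕ), ‖iteratedDeriv k (Z n) 0‖ ≤ iteratedDeriv k K 0) :
    (∃ ε > 0, AnalyticOnNhd ℝ Zlim (Metric.ball 0 ε)) ∧
    ∀ k : ℕ, ‖iteratedDeriv k Zlim 0‖ ≤ iteratedDeriv k K 0 := by
  obtain ⟨p, hp⟩ := hK
  choose q hq using fun n => hZa n 0 h0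
  have hcoeff : ∀ n k, ‖(q n).coeff k‖ ≤ ‖p.coeff k‖ := fun n k => by
    have h := (hmaj n k).trans (le_abs_self _)
    rw [(hq n).norm_iteratedDeriv_eq, ← Real.norm_eq_abs, hp.norm_iteratedDeriv_eq] at h
    exact le_of_mul_le_mul_left h (by positivity)
  obtain ⟨r, hr0, hrp, hrU⟩ := hU.exists_nnreal_lt_ball_subset h0 hp.radius_pos
  have hZ : ∀ n, HasFPowerSeriesOnBall (Z n) (q n) 0 r := by
    intro n
    have hrad : p.radius ≤ (q n).radius := radius_le_radius_of_norm_le fun k => by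
      simpa only [norm_apply_eq_norm_coef] using hcoeff n k
    refine AnalyticOnNhd.hasFPowerSeriesOnBall_of_le_radius ((hZa n).mono ?_) (hq n)
      (ENNReal.coe_pos.mpr hr0) (hrp.le.trans hrad)
    rwa [Metric.eball_coe]
  have hsum : Summable fun k => ‖p.coeff k‖ * (r : ℝ) ^ k := by
    simpa only [norm_apply_eq_norm_coef] using p.summable_norm_mul_pow hrp
  obtain ⟨P, hP, hPq⟩ :=
    exists_hasFPowerSeriesOnBall_of_tendsto hZ hcoeff hsum fun x hx => hconv x (hrU hx)
  refine ⟨⟨r, hr0, by simpa only [Metric.eball_coe] using hP.analyticOnNhd⟩, fun k => ?_⟩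
  have hlim : Tendsto (fun n => iteratedDeriv k (Z n) 0) atTop (𝓝 (iteratedDeriv k Zlim 0)) := by
    simpa only [(hq _).iteratedDeriv_eq_factorial_smul_coeff,
      hP.hasFPowerSeriesAt.iteratedDeriv_eq_factorial_smul_coeff] using (hPq k).const_smul (k !)
  exact le_of_tendsto' hlim.norm fun n => hmaj n k

/-- A pointwise limit of Banach-space-valued real analytic functions whose
Taylor coefficients at `0` are uniformly majorized by the Taylor coefficients of a function `K`
that is real analytic at `0` with nonnegative derivatives at `0`, is itself real analytic on a
neighborhood of `0`, with the same majorization of its derivatives at `0`. -/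
theorem stmt_16 {X : Type*} [NormedAddCommGroup X] [NormedSpace ℝ X] [CompleteSpace X]
    (U : Set ℝ) (hU : IsOpen U) (h0 : (0 : ℝ) ∈ U)
    (Z : ℕ → ℝ → X) (hZa : ∀ n, AnalyticOnNhd ℝ (Z n) U)
    (Zlim : ℝ → X)
    (hconv : ∀ x ∈ U, Filter.Tendsto (fun n => Z n x) Filter.atTop (nhds (Zlim x)))
    (K : ℝ → ℝ) (hK : AnalyticAt ℝ K 0)
    (hKpos : ∀ k : ℕ, 0 ≤ iteratedDeriv k K 0)
    (hmaj : ∀ (n : ℕ) (k : ℕ), ‖iteratedDeriv k (Z n) 0‖ ≤ iteratedDeriv k K 0) :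
    (∃ ε > 0, AnalyticOnNhd ℝ Zlim (Metric.ball 0 ε)) ∧
    ∀ k : ℕ, ‖iteratedDeriv k Zlim 0‖ ≤ iteratedDeriv k K 0 :=
  stmt_16_general U hU h0 Z hZa Zlim hconv K hK hmaj
end

section
/- Let X be a real Banach space and n ∈ ℕ. For 0 ≤ k ≤ n let P_k be a continuous k-multilinear map X^k → X (with P₀ a fixed element of X), set P(x) := Σ_{k=0}^n P_k(x, …, x) for x ∈ X, and 𝔓(a) := Σ_{k=0}^n ‖P_k‖·a^k for a ∈ ℝ, where ‖P_k‖ denotes the operator norm of P_k. Let C ∈ X, let U be an open neighborhood of 0 in ℝ, and let Z : U → X be infinitely differentiable and satisfy Z(λ) = λ·P(Z(λ)) + C for all λ ∈ U. Let K be a real-valued function, real analytic on some neighborhood of 0 in ℝ, satisfying K(λ) = λ·𝔓(K(λ)) + ‖C‖_X there. Then for every r ∈ ℕ: ‖(d^r Z/dλ^r)(0)‖_X ≤ (d^r K/dλ^r)(0); that is, the formal Taylor series of Z at 0 is majored by the Taylor series of K at 0. -/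
/-!
Differentiating `Z(λ) = λ • P(Z(λ)) + C` `s + 1` times at `λ = 0` gives
`Z⁽ˢ⁺¹⁾(0) = (s + 1) • Σₖ Σ_c Pₖ(Z⁽ᶜ¹⁾(0), …, Z⁽ᶜᵏ⁾(0))`, a sum over the ways of distributing
the `s` derivatives among the `k` arguments, so it only involves derivatives of order `≤ s`.
The majorant `K` satisfies the same recursion with `Pₖ` replaced by `‖Pₖ‖` times the `k`-fold
product of reals, and `‖Pₖ(v₁, …, vₖ)‖ ≤ ‖Pₖ‖ ∏ ‖vᵢ‖` closes a strong induction on the order.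
Both functions are first replaced by globally smooth ones agreeing with them near `0`.
-/

open Filter Finset
open scoped Topology ContDiff

theorem exists_contDiff_eventuallyEq {E F : Type*} [NormedAddCommGroup E] [NormedSpace ℝ E]
    [HasContDiffBump E] [NormedAddCommGroup F] [NormedSpace ℝ F] {n : ℕ∞} {f : E → F}
    {s : Set E} {x : E} (hs : s ∈ 𝓝 x) (hf : ContDiffOn ℝ n f s) :
    ∃ g : E → F, ContDiff ℝ n g ∧ g =ᶠ[𝓝 x] f := by
  obtain ⟨ε, hε, hball⟩ := Metric.mem_nhds_iff.mp hs
  let χ : ContDiffBump x := ⟨ε / 4, ε / 2, by positivity, by linarith⟩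
  refine ⟨fun y => χ y • f y, contDiff_iff_contDiffAt.2 fun y => ?_, ?_⟩
  · by_cases hy : y ∈ Metric.ball x ε
    · exact χ.contDiffAt.smul
        (hf.contDiffAt (mem_of_superset (Metric.isOpen_ball.mem_nhds hy) hball))
    · have hχy : y ∉ tsupport χ := by
        rw [χ.tsupport_eq]
        exact fun h => hy (Metric.closedBall_subset_ball (show ε / 2 < ε by linarith) h)
      refine (contDiffAt_const (c := (0 : F))).congr_of_eventuallyEq ?_
      filter_upwards [(isClosed_tsupport χ).isOpen_compl.mem_nhds hχy] with z hz
      simp [image_eq_zero_of_notMem_tsupport hz]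
  · filter_upwards [χ.eventuallyEq_one] with y hy
    simp [hy]

theorem Fin.card_filter_cons_eq {α : Type*} [DecidableEq α] {r : ℕ} (c : Fin r → α) (j i : α) :
    #{t | (Fin.cons j c : Fin (r + 1) → α) t = i} = #{t | c t = i} + if j = i then 1 else 0 := by
  rw [Fin.card_filter_univ_succ', add_comm]
  simp

section
variable {𝕜 : Type*} [NontriviallyNormedField 𝕜]
  {F : Type*} [NormedAddCommGroup F] [NormedSpace 𝕜 F]

theorem iteratedDeriv_succ_smul_id_zero {s : ℕ} {G : 𝕜 → F} (hG : ContDiffAt 𝕜 (s + 1) G 0) :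
    iteratedDeriv (s + 1) (fun x => x • G x) 0 = (s + 1) • iteratedDeriv s G 0 := by
  have h := iteratedDerivWithin_smul (f := fun x : 𝕜 => x) (Set.mem_univ 0) uniqueDiffOn_univ
    contDiffWithinAt_id hG.contDiffWithinAt
  simp only [iteratedDerivWithin_univ] at h
  rw [show (fun x => x • G x) = (fun x : 𝕜 => x) • G from rfl, h, sum_eq_single 1]
  · simp [iteratedDeriv_fun_id_zero]
  · intro i _ hi
    simp [iteratedDeriv_fun_id_zero, hi]
  · simp

variable {ι : Type*} [Fintype ι] [DecidableEq ι]
  {E : ι → Type*} [∀ i, NormedAddCommGroup (E i)] [∀ i, NormedSpace 𝕜 (E i)]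

theorem HasDerivAt.multilinear_comp (P : ContinuousMultilinearMap 𝕜 E F) {g : ∀ i, 𝕜 → E i}
    {g' : ∀ i, E i} {x : 𝕜} (hg : ∀ i, HasDerivAt (g i) (g' i) x) :
    HasDerivAt (fun y => P (fun i => g i y))
      (∑ i, P (Function.update (fun j => g j x) i (g' i))) x := by
  simpa using (HasFDerivAt.multilinear_comp (f := P) fun i => (hg i).hasFDerivAt).hasDerivAt

/-- Each of the `r` derivatives falls on one argument of `P`; `c` records which. -/
theorem ContinuousMultilinearMap.iteratedDeriv_comp (P : ContinuousMultilinearMap 𝕜 E F)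
    {g : ∀ i, 𝕜 → E i} (hg : ∀ i, ContDiff 𝕜 ∞ (g i)) (r : ℕ) (x : 𝕜) :
    iteratedDeriv r (fun y => P (fun i => g i y)) x =
      ∑ c : Fin r → ι, P (fun i => iteratedDeriv #{t | c t = i} (g i) x) := by
  induction r generalizing x with
  | zero => simp
  | succ r ih =>
    have hderiv : HasDerivAt
        (fun y => ∑ c : Fin r → ι, P (fun i => iteratedDeriv #{t | c t = i} (g i) y))
        (∑ c : Fin r → ι, ∑ j, P (Function.update (fun i => iteratedDeriv #{t | c t = i} (g i) x)
          j (iteratedDeriv (#{t | c t = j} + 1) (g j) x))) x := by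
      refine HasDerivAt.fun_sum fun c _ => HasDerivAt.multilinear_comp P fun i => ?_
      rw [iteratedDeriv_succ]
      exact ((hg i).differentiable_iteratedDeriv _
        (by exact_mod_cast ENat.natCast_lt_top _)).differentiableAt.hasDerivAt
    rw [iteratedDeriv_succ, funext ih, hderiv.deriv,
      ← (Fin.consEquiv fun _ => ι).sum_comp, Fintype.sum_prod_type, sum_comm]
    refine sum_congr rfl fun j _ => sum_congr rfl fun c _ => congrArg P ?_
    funext i
    rcases eq_or_ne i j with rfl | hij
    · simp [Fin.card_filter_cons_eq]
    · simp [Fin.card_filter_cons_eq, hij, Ne.symm hij]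
theorem iteratedDeriv_succ_eq_of_eventuallyEq_smul_add
    {n : ℕ} (P : ∀ k : Fin (n + 1), ContinuousMultilinearMap 𝕜 (fun _ : Fin k => F) F)
    {C : F} {f : 𝕜 → F} (hf : ContDiff 𝕜 ∞ f)
    (hfeq : ∀ᶠ x in 𝓝 0, f x = x • (∑ k, P k fun _ => f x) + C) (s : ℕ) :
    iteratedDeriv (s + 1) f 0 =
      (s + 1) • ∑ k : Fin (n + 1), ∑ c : Fin s → Fin k,
        P k (fun i => iteratedDeriv #{t | c t = i} f 0) := by
  have hPf : ∀ k, ContDiff 𝕜 ∞ (fun x => P k fun _ => f x) :=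
    fun k => (P k).contDiff.comp (contDiff_pi.2 fun _ => hf)
  calc iteratedDeriv (s + 1) f 0
      = iteratedDeriv (s + 1) (fun x => C + x • ∑ k, P k fun _ => f x) 0 :=
        Filter.EventuallyEq.iteratedDeriv_eq _ (hfeq.mono fun x hx => hx.trans (add_comm _ _))
    _ = iteratedDeriv (s + 1) (fun x => x • ∑ k, P k fun _ => f x) 0 :=
        iteratedDeriv_const_add s.succ_pos C
    _ = (s + 1) • iteratedDeriv s (fun x => ∑ k, P k fun _ => f x) 0 :=
        iteratedDeriv_succ_smul_id_zero ((ContDiff.sum fun k _ => hPf k).of_le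
          (by exact_mod_cast le_top)).contDiffAt
    _ = _ := by
        rw [iteratedDeriv_fun_sum fun k _ => (hPf k).contDiffAt.of_le (by exact_mod_cast le_top)]
        simp_rw [(P _).iteratedDeriv_comp fun _ => hf]
end

theorem norm_iteratedDeriv_le_of_majorant {X : Type*} [NormedAddCommGroup X] [NormedSpace ℝ X]
    {n : ℕ} {P : ∀ k : Fin (n + 1), ContinuousMultilinearMap ℝ (fun _ : Fin k => X) X}
    {a : Fin (n + 1) → ℝ} (ha : ∀ k, ‖P k‖ ≤ a k) {C : X} {c : ℝ} (hc : ‖C‖ ≤ c)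
    {f : ℝ → X} {g : ℝ → ℝ} (hf : ContDiff ℝ ∞ f) (hg : ContDiff ℝ ∞ g)
    (hfeq : ∀ᶠ x in 𝓝 0, f x = x • (∑ k, P k fun _ => f x) + C)
    (hgeq : ∀ᶠ x in 𝓝 0, g x = x * (∑ k, a k * g x ^ (k : ℕ)) + c) (r : ℕ) :
    ‖iteratedDeriv r f 0‖ ≤ iteratedDeriv r g 0 := by
  let Q (k : Fin (n + 1)) : ContinuousMultilinearMap ℝ (fun _ : Fin k => ℝ) ℝ :=
    a k • ContinuousMultilinearMap.mkPiAlgebra ℝ (Fin k) ℝ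
  have hQ (k : Fin (n + 1)) (v : Fin k → ℝ) : Q k v = a k * ∏ i, v i := rfl
  have hgeq' : ∀ᶠ x in 𝓝 0, g x = x • (∑ k, Q k fun _ => g x) + c := by
    filter_upwards [hgeq] with x hx
    simp only [hQ, Fin.prod_const, smul_eq_mul]
    exact hx
  induction r using Nat.strong_induction_on with
  | _ r ih =>
  cases r with
  | zero =>
    have hf0 : f 0 = C := by simpa using hfeq.self_of_nhds
    have hg0 : g 0 = c := by simpa using hgeq.self_of_nhds
    simpa [hf0, hg0] using hc
  | succ s =>
    rw [iteratedDeriv_succ_eq_of_eventuallyEq_smul_add P hf hfeq,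
      iteratedDeriv_succ_eq_of_eventuallyEq_smul_add Q hg hgeq', RCLike.norm_nsmul ℝ,
      nsmul_eq_mul, nsmul_eq_mul]
    gcongr
    refine (norm_sum_le _ _).trans (sum_le_sum fun k _ =>
      (norm_sum_le _ _).trans (sum_le_sum fun c _ => ?_))
    have hle (i : Fin k) :
        ‖iteratedDeriv #{t | c t = i} f 0‖ ≤ iteratedDeriv #{t | c t = i} g 0 :=
      ih _ ((card_filter_le _ _).trans_lt (by simp))
    calc ‖P k fun i => iteratedDeriv #{t | c t = i} f 0‖
        ≤ ‖P k‖ * ∏ i, ‖iteratedDeriv #{t | c t = i} f 0‖ := (P k).le_opNorm _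
      _ ≤ a k * ∏ i, iteratedDeriv #{t | c t = i} g 0 :=
        mul_le_mul (ha k) (prod_le_prod (fun _ _ => norm_nonneg _) fun i _ => hle i)
          (prod_nonneg fun _ _ => norm_nonneg _) ((norm_nonneg _).trans (ha k))

theorem stmt_17_general {X : Type*} [NormedAddCommGroup X] [NormedSpace ℝ X]
    (n : ℕ) (P : ∀ k : Fin (n + 1), ContinuousMultilinearMap ℝ (fun _ : Fin k => X) X)
    (C : X) (U : Set ℝ) (hU : IsOpen U) (h0 : (0 : ℝ) ∈ U)
    (Z : ℝ → X) (hZ : ContDiffOn ℝ (⊤ : ℕ∞) Z U)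
    (hZeq : ∀ lam ∈ U, Z lam = lam • (∑ k : Fin (n + 1), P k fun _ => Z lam) + C)
    (K : ℝ → ℝ) (hK : AnalyticAt ℝ K 0)
    (hKeq : ∀ᶠ lam in nhds (0 : ℝ),
      K lam = lam * (∑ k : Fin (n + 1), ‖P k‖ * K lam ^ (k : ℕ)) + ‖C‖) :
    ∀ r : ℕ, ‖iteratedDeriv r Z 0‖ ≤ iteratedDeriv r K 0 := by
  have hU0 : U ∈ 𝓝 0 := hU.mem_nhds h0
  obtain ⟨f, hf, hfZ⟩ := exists_contDiff_eventuallyEq hU0 hZ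
  obtain ⟨V, hV0, hKV⟩ : ∃ V ∈ 𝓝 (0 : ℝ), ContDiffOn ℝ (⊤ : ℕ∞) K V :=
    let ⟨V, hV0, hKV⟩ := hK.eventually_analyticAt.exists_mem
    ⟨V, hV0, fun y hy => (hKV y hy).contDiffAt.contDiffWithinAt⟩
  obtain ⟨g, hg, hgK⟩ := exists_contDiff_eventuallyEq hV0 hKV
  intro r
  rw [← hfZ.iteratedDeriv_eq r, ← hgK.iteratedDeriv_eq r]
  refine norm_iteratedDeriv_le_of_majorant (fun k => le_refl ‖P k‖) (le_refl ‖C‖) hf hg ?_ ?_ r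
  · filter_upwards [hfZ, hU0] with x hfx hx
    rw [hfx]
    exact hZeq x hx
  · filter_upwards [hgK, hKeq] with x hgx hx
    rw [hgx]
    exact hx

/-- Majorization of the Taylor coefficients of a smooth solution of the
polynomial fixed point equation `Z(λ) = λ·P(Z(λ)) + C` in a Banach space by the Taylor
coefficients of a scalar analytic solution of the majorant equation
`K(λ) = λ·𝔓(K(λ)) + ‖C‖`, where `𝔓(a) = Σₖ ‖Pₖ‖ aᵏ`. -/
theorem stmt_17 {X : Type*} [NormedAddCommGroup X] [NormedSpace ℝ X] [CompleteSpace X]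
    (n : ℕ) (P : ∀ k : Fin (n + 1), ContinuousMultilinearMap ℝ (fun _ : Fin k => X) X)
    (C : X) (U : Set ℝ) (hU : IsOpen U) (h0 : (0 : ℝ) ∈ U)
    (Z : ℝ → X) (hZ : ContDiffOn ℝ (⊤ : ℕ∞) Z U)
    (hZeq : ∀ lam ∈ U, Z lam = lam • (∑ k : Fin (n + 1), P k fun _ => Z lam) + C)
    (K : ℝ → ℝ) (hK : AnalyticAt ℝ K 0)
    (hKeq : ∀ᶠ lam in nhds (0 : ℝ),
      K lam = lam * (∑ k : Fin (n + 1), ‖P k‖ * K lam ^ (k : ℕ)) + ‖C‖) :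
    ∀ r : ℕ, ‖iteratedDeriv r Z 0‖ ≤ iteratedDeriv r K 0 :=
  stmt_17_general n P C U hU h0 Z hZ hZeq K hK hKeq
end
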